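/- There exist a constant c > 0 and a threshold d₀ such that for all d ≥ d₀ and all m > 0: if A is a (1/m³, 1, 1/m³)-perfectly generalizing algorithm that (0.01, 0.01)-accurately solves the one-way marginals problem over d coordinates using m samples, then m ≥ c·d. -/

import Mathlib

open MeasureTheory

noncomputable section

/-- The distribution of `m` i.i.d. draws from `D`. -/
def iidSample {X : Type*} [MeasurableSpace X] (D : Measure X) (m : ℕ) :
    Measure (Fin m → X) :=
  Measure.pi fun _ => D

/-- The Rademacher distribution on `ℝ` with mean `p`: it takes the value `1`
with probability `(1+p)/2` and `-1` with probability `(1-p)/2`. -/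
def rademacher (p : ℝ) : Measure ℝ :=
  ENNReal.ofReal ((1 + p) / 2) • Measure.dirac 1 +
    ENNReal.ofReal ((1 - p) / 2) • Measure.dirac (-1)

/-- The product of `d` Rademacher distributions with mean vector `p`. -/
def radProduct (d : ℕ) (p : Fin d → ℝ) : Measure (Fin d → ℝ) :=
  Measure.pi fun j => rademacher (p j)

/-- `A` `(α,β)`-accurately solves the one-way marginals problem over `d`
coordinates using `m` samples: for every mean vector `p ∈ [-1,1]^d`, given `m`
i.i.d. samples from the corresponding Rademacher product distribution, `A`
outputs a vector `v` with `‖v - p‖_∞ ≤ α` with probability at least `1-β`. -/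
def AccurateOWM (d m : ℕ) (A : (Fin m → (Fin d → ℝ)) → Measure (Fin d → ℝ))
    (α β : ℝ) : Prop :=
  ∀ p : Fin d → ℝ, (∀ j, |p j| ≤ 1) →
    1 - β ≤ (((iidSample (radProduct d p) m).bind A)
      {v | ∀ j, |v j - p j| ≤ α}).toReal

/-- Distributions `P` and `Q` are `(ε,δ)`-indistinguishable. -/
def Indist {Y : Type*} [MeasurableSpace Y] (ε δ : ℝ) (P Q : Measure Y) : Prop :=
  ∀ O : Set Y,
    Real.exp (-ε) * ((P O).toReal - δ) ≤ (Q O).toReal ∧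
    (Q O).toReal ≤ Real.exp ε * (P O).toReal + δ

/-- `A` is `(β,ε,δ)`-perfectly generalizing. -/
def PerfectlyGeneralizing {X Y : Type*} [MeasurableSpace X] [MeasurableSpace Y] {m : ℕ}
    (A : (Fin m → X) → Measure Y) (β ε δ : ℝ) : Prop :=
  ∀ D : Measure X, IsProbabilityMeasure D →
    ∃ Sim : Measure Y, IsProbabilityMeasure Sim ∧
      1 - β ≤ ((iidSample D m) {S | Indist ε δ (A S) Sim}).toReal

namespace PGLB
open Finset MeasureTheory ENNReal

/-- Sum over a function type of products equals product of sums. -/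
lemma sum_pi_prod {ι κ R : Type*} [Fintype ι] [DecidableEq ι] [Fintype κ] [CommSemiring R]
    (f : ι → κ → R) : ∑ g : ι → κ, ∏ i, f i (g i) = ∏ i, ∑ k, f i k :=
  (Fintype.prod_sum (κ := fun _ => κ) f).symm

/-- A finite product of finitely-atomic measures is finitely atomic. -/
lemma piAtomic {n : ℕ} {X : Type*} [MeasurableSpace X] [MeasurableSingletonClass X]
    {κ : Type*} [Fintype κ]
    (c : Fin n → κ → ℝ≥0∞) (hc : ∀ i k, c i k ≠ ∞) (z : Fin n → κ → X) :
    Measure.pi (fun i => ∑ k, c i k • Measure.dirac (z i k)) =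
      ∑ g : Fin n → κ, (∏ i, c i (g i)) • Measure.dirac (fun i => z i (g i)) := by
  classical
  haveI : ∀ i, SigmaFinite ((∑ k, c i k • Measure.dirac (z i k))) := by
    intro i
    have hfin : IsFiniteMeasure (∑ k, c i k • Measure.dirac (z i k)) := by
      constructor
      rw [Measure.coe_finset_sum]
      simp only [Finset.sum_apply, Measure.smul_apply, smul_eq_mul]
      exact ENNReal.sum_lt_top.2 (fun k _ => by
        simp [measure_univ, lt_top_iff_ne_top, hc i k])
    infer_instance
  apply Measure.pi_eq
  intro s hs
  rw [Measure.coe_finset_sum]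
  simp only [Finset.sum_apply, Measure.smul_apply, smul_eq_mul]
  have hmeas : MeasurableSet (Set.pi Set.univ s) := MeasurableSet.univ_pi hs
  have step1 : ∀ g : Fin n → κ,
      (∏ i, c i (g i)) * (Measure.dirac (fun i => z i (g i))) (Set.pi Set.univ s)
        = ∏ i, (c i (g i) * (if z i (g i) ∈ s i then 1 else 0)) := by
    intro g
    rw [Measure.dirac_apply' _ hmeas, Finset.prod_mul_distrib]
    congr 1
    rw [Set.indicator_apply]
    simp only [Set.mem_univ_pi, Pi.one_apply]
    by_cases h : ∀ i, z i (g i) ∈ s i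
    · rw [if_pos h]
      exact (Finset.prod_eq_one (fun i _ => by rw [if_pos (h i)])).symm
    · rw [if_neg h]
      push_neg at h
      obtain ⟨i, hi⟩ := h
      exact (Finset.prod_eq_zero (Finset.mem_univ i) (by rw [if_neg hi])).symm
  rw [Finset.sum_congr rfl (fun g _ => step1 g),
    sum_pi_prod (f := fun i k => c i k * (if z i k ∈ s i then (1:ℝ≥0∞) else 0))]
  refine Finset.prod_congr rfl (fun i _ => ?_)
  rw [Measure.coe_finset_sum]
  simp only [Finset.sum_apply, Measure.smul_apply, smul_eq_mul]
  refine Finset.sum_congr rfl (fun k _ => ?_)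
  rw [Measure.dirac_apply' _ (hs i), Set.indicator_apply]
  simp

end PGLB
namespace PGLB
open Finset MeasureTheory ENNReal

def eb (t : Bool) : ℝ := if t then 1 else -1

lemma eb_sq (t : Bool) : eb t * eb t = 1 := by cases t <;> norm_num [eb]

lemma abs_eb (t : Bool) : |eb t| = 1 := by cases t <;> norm_num [eb]

def clip (x : ℝ) : ℝ := max (-1) (min 1 x)

lemma abs_clip_le (x : ℝ) : |clip x| ≤ 1 := by
  rw [abs_le]; constructor
  · exact le_max_left _ _
  · exact max_le (by norm_num) (min_le_left _ _)

lemma clip_eq_self {x : ℝ} (h : |x| ≤ 1) : clip x = x := by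
  rw [abs_le] at h
  rw [clip, min_eq_right h.2, max_eq_right h.1]

lemma measurable_clip : Measurable clip :=
  (continuous_const.max (continuous_const.min continuous_id)).measurable

def rho (t : Bool) (u : ℝ) : ℝ := (1 + eb t * u) / 2

lemma rho_nonneg {t : Bool} {u : ℝ} (h : |u| ≤ 1) : 0 ≤ rho t u := by
  have : |eb t * u| ≤ 1 := by rw [abs_mul, abs_eb, one_mul]; exact h
  rw [abs_le] at this
  unfold rho; linarith [this.1]

lemma rho_le_one {t : Bool} {u : ℝ} (h : |u| ≤ 1) : rho t u ≤ 1 := by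
  have : |eb t * u| ≤ 1 := by rw [abs_mul, abs_eb, one_mul]; exact h
  rw [abs_le] at this
  unfold rho; linarith [this.2]

lemma rho_add (u : ℝ) : rho true u + rho false u = 1 := by
  simp [rho, eb]; ring

lemma continuous_rho (t : Bool) : Continuous (fun u => rho t u) := by
  unfold rho; fun_prop

variable {d m : ℕ}

def emb (b : Fin m → Fin d → Bool) : Fin m → Fin d → ℝ := fun i j => eb (b i j)

def wgt (q : Fin d → ℝ) (b : Fin m → Fin d → Bool) : ℝ := ∏ i, ∏ j, rho (b i j) (q j)

def colP (j : Fin d) (u : ℝ) (b : Fin m → Fin d → Bool) : ℝ := ∏ i, rho (b i j) u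

def Ys (j : Fin d) (b : Fin m → Fin d → Bool) : ℝ := ∑ i, eb (b i j)

lemma wgt_nonneg {q : Fin d → ℝ} (hq : ∀ j, |q j| ≤ 1) (b : Fin m → Fin d → Bool) :
    0 ≤ wgt q b :=
  Finset.prod_nonneg fun i _ => Finset.prod_nonneg fun j _ => rho_nonneg (hq j)

lemma wgt_eq_prod_colP (q : Fin d → ℝ) (b : Fin m → Fin d → Bool) :
    wgt q b = ∏ j, colP j (q j) b := by
  rw [wgt, Finset.prod_comm]; rfl

/-- total mass of the weights -/
lemma wgt_total (q : Fin d → ℝ) : ∑ b : Fin m → Fin d → Bool, wgt q b = 1 := by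
  unfold wgt
  have h1 : ∀ b : Fin m → Fin d → Bool, (∏ i, ∏ j, rho (b i j) (q j))
      = ∏ i, (fun (i : Fin m) (h : Fin d → Bool) => ∏ j, rho (h j) (q j)) i (b i) := by
    intro b; rfl
  rw [Finset.sum_congr rfl (fun b _ => h1 b),
    sum_pi_prod (f := fun (_ : Fin m) (h : Fin d → Bool) => ∏ j, rho (h j) (q j))]
  have h2 : ∀ i : Fin m, (∑ h : Fin d → Bool, ∏ j, rho (h j) (q j)) = 1 := by
    intro i
    rw [sum_pi_prod (f := fun (j : Fin d) (t : Bool) => rho t (q j))]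
    refine Finset.prod_eq_one (fun j _ => ?_)
    rw [Fintype.sum_bool]
    exact rho_add (q j)
  rw [Finset.prod_congr rfl (fun i _ => h2 i), Finset.prod_const_one]

lemma rademacher_atomic (p : ℝ) :
    rademacher p = ∑ t : Bool, ENNReal.ofReal (rho t p) • Measure.dirac (eb t) := by
  rw [Fintype.sum_bool, rademacher]
  have h1 : rho true p = (1 + p) / 2 := by norm_num [rho, eb]
  have h2 : rho false p = (1 - p) / 2 := by norm_num [rho, eb]; ring
  have h3 : eb true = 1 := by norm_num [eb]
  have h4 : eb false = -1 := by norm_num [eb]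
  rw [h1, h2, h3, h4]

theorem rademacher_prob {p : ℝ} (hp : |p| ≤ 1) : IsProbabilityMeasure (rademacher p) := by
  constructor
  rw [rademacher_atomic, Measure.coe_finset_sum]
  simp only [Finset.sum_apply, Measure.smul_apply, smul_eq_mul, measure_univ, mul_one]
  rw [Fintype.sum_bool, ← ENNReal.ofReal_add (rho_nonneg hp) (rho_nonneg hp), rho_add p]
  exact ENNReal.ofReal_one

lemma radProduct_atomic {d : ℕ} (p : Fin d → ℝ) (hp : ∀ j, |p j| ≤ 1) :
    radProduct d p = ∑ h : Fin d → Bool,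
      ENNReal.ofReal (∏ j, rho (h j) (p j)) • Measure.dirac (fun j => eb (h j)) := by
  rw [radProduct]
  have : (fun j : Fin d => rademacher (p j))
      = fun j => ∑ t : Bool, ENNReal.ofReal (rho t (p j)) • Measure.dirac (eb t) := by
    funext j; exact rademacher_atomic (p j)
  rw [this, piAtomic (fun j t => ENNReal.ofReal (rho t (p j))) (fun _ _ => ofReal_ne_top)
    (fun _ t => eb t)]
  refine Finset.sum_congr rfl (fun h _ => ?_)
  congr 1
  rw [← ENNReal.ofReal_prod_of_nonneg (fun j _ => rho_nonneg (hp j))]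

lemma iid_atomic {d m : ℕ} (p : Fin d → ℝ) (hp : ∀ j, |p j| ≤ 1) :
    iidSample (radProduct d p) m = ∑ b : Fin m → Fin d → Bool,
      ENNReal.ofReal (wgt p b) • Measure.dirac (emb b) := by
  rw [iidSample]
  have : (fun _ : Fin m => radProduct d p) = fun _ => ∑ h : Fin d → Bool,
      ENNReal.ofReal (∏ j, rho (h j) (p j)) • Measure.dirac (fun j => eb (h j)) := by
    funext _; exact radProduct_atomic p hp
  rw [this, piAtomic (fun (_ : Fin m) (h : Fin d → Bool) => ENNReal.ofReal (∏ j, rho (h j) (p j)))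
    (fun _ _ => ofReal_ne_top) (fun _ h => fun j => eb (h j))]
  refine Finset.sum_congr rfl (fun b _ => ?_)
  congr 1
  rw [← ENNReal.ofReal_prod_of_nonneg (fun i _ => Finset.prod_nonneg
    (fun (j : Fin d) _ => rho_nonneg (hp j)))]
  rfl

end PGLB
namespace PGLB
open Finset MeasureTheory

variable {d m : ℕ}

lemma sum_grid (f : Fin m × Fin d → Bool → ℝ) :
    ∑ b : Fin m → Fin d → Bool, ∏ c : Fin m × Fin d, f c (b c.1 c.2)
      = ∏ c : Fin m × Fin d, (f c true + f c false) := by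
  classical
  have h : ∑ b : Fin m → Fin d → Bool, ∏ c : Fin m × Fin d, f c (b c.1 c.2)
      = ∑ β : Fin m × Fin d → Bool, ∏ c : Fin m × Fin d, f c (β c) := by
    refine (Fintype.sum_equiv (Equiv.curry (Fin m) (Fin d) Bool)
      (fun β => ∏ c : Fin m × Fin d, f c (β c))
      (fun b => ∏ c : Fin m × Fin d, f c (b c.1 c.2)) (fun β => ?_)).symm
    exact Finset.prod_congr rfl (fun c _ => rfl)
  rw [h, sum_pi_prod (f := f)]
  refine Finset.prod_congr rfl (fun c _ => ?_)
  rw [Fintype.sum_bool]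

lemma wgt_flat (q : Fin d → ℝ) (b : Fin m → Fin d → Bool) :
    wgt q b = ∏ c : Fin m × Fin d, rho (b c.1 c.2) (q c.2) := by
  rw [wgt, Fintype.prod_prod_type]

lemma cell_cov (q : Fin d → ℝ) (c₁ c₂ : Fin m × Fin d) :
    ∑ b : Fin m → Fin d → Bool,
      wgt q b * ((eb (b c₁.1 c₁.2) - q c₁.2) * (eb (b c₂.1 c₂.2) - q c₂.2))
      = if c₁ = c₂ then 1 - q c₁.2 ^ 2 else 0 := by
  classical
  set f : Fin m × Fin d → Bool → ℝ := fun c t =>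
    rho t (q c.2) * ((if c = c₁ then eb t - q c₁.2 else 1) *
      (if c = c₂ then eb t - q c₂.2 else 1)) with hf
  have key : ∀ b : Fin m → Fin d → Bool,
      wgt q b * ((eb (b c₁.1 c₁.2) - q c₁.2) * (eb (b c₂.1 c₂.2) - q c₂.2))
        = ∏ c : Fin m × Fin d, f c (b c.1 c.2) := by
    intro b
    rw [hf]
    simp only [Finset.prod_mul_distrib]
    rw [Fintype.prod_ite_eq' c₁ (fun c => eb (b c.1 c.2) - q c₁.2),
      Fintype.prod_ite_eq' c₂ (fun c => eb (b c.1 c.2) - q c₂.2), ← wgt_flat]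
  rw [Finset.sum_congr rfl (fun b _ => key b), sum_grid f]
  by_cases hc : c₁ = c₂
  · subst hc
    rw [if_pos rfl]
    rw [Finset.prod_eq_single c₁ ?h₀ (by intro h; exact absurd (Finset.mem_univ c₁) h)]
    · simp only [hf, if_pos rfl]
      norm_num [rho, eb]
      ring
    · intro c _ hne
      simp only [hf, if_neg hne]
      norm_num [rho, eb]
      ring
  · rw [if_neg hc]
    refine Finset.prod_eq_zero (Finset.mem_univ c₁) ?_
    simp only [hf, if_pos rfl, if_neg hc]
    norm_num [rho, eb]
    ring

lemma Ys_sub (q : Fin d → ℝ) (j : Fin d) (b : Fin m → Fin d → Bool) :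
    Ys j b - m * q j = ∑ i, (eb (b i j) - q j) := by
  rw [Finset.sum_sub_distrib, Finset.sum_const, card_univ, Fintype.card_fin, Ys,
    nsmul_eq_mul]

lemma momentYY (q : Fin d → ℝ) (j k : Fin d) :
    ∑ b : Fin m → Fin d → Bool, wgt q b * ((Ys j b - m * q j) * (Ys k b - m * q k))
      = if j = k then m * (1 - q j ^ 2) else 0 := by
  classical
  have expand : ∀ b : Fin m → Fin d → Bool,
      wgt q b * ((Ys j b - m * q j) * (Ys k b - m * q k))
        = ∑ i : Fin m, ∑ i' : Fin m,
            wgt q b * ((eb (b i j) - q j) * (eb (b i' k) - q k)) := by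
    intro b
    rw [Ys_sub, Ys_sub, Finset.sum_mul_sum, Finset.mul_sum]
    refine Finset.sum_congr rfl (fun i _ => ?_)
    rw [Finset.mul_sum]
  rw [Finset.sum_congr rfl (fun b _ => expand b), Finset.sum_comm]
  have swap2 : ∀ i : Fin m, (∑ b : Fin m → Fin d → Bool, ∑ i' : Fin m,
      wgt q b * ((eb (b i j) - q j) * (eb (b i' k) - q k)))
      = ∑ i' : Fin m, (if ((i : Fin m), j) = (i', k) then 1 - q j ^ 2 else 0) := by
    intro i
    rw [Finset.sum_comm]
    exact Finset.sum_congr rfl (fun i' _ => cell_cov q (i, j) (i', k))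
  rw [Finset.sum_congr rfl (fun i _ => swap2 i)]
  by_cases hjk : j = k
  · subst hjk
    rw [if_pos rfl]
    have : ∀ i : Fin m, (∑ i' : Fin m, if ((i : Fin m), j) = (i', j) then 1 - q j ^ 2 else 0)
        = 1 - q j ^ 2 := by
      intro i
      have : ∀ i' : Fin m, (if ((i : Fin m), j) = (i', j) then 1 - q j ^ 2 else 0)
          = if i' = i then 1 - q j ^ 2 else 0 := by
        intro i'
        by_cases h : i' = i
        · subst h; simp
        · rw [if_neg (by simp [Prod.ext_iff, Ne.symm h]), if_neg h]
      rw [Finset.sum_congr rfl (fun i' _ => this i'), Finset.sum_ite_eq' Finset.univ i]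
      rw [if_pos (Finset.mem_univ i)]
    rw [Finset.sum_congr rfl (fun i _ => this i), Finset.sum_const, card_univ,
      Fintype.card_fin, nsmul_eq_mul]
  · rw [if_neg hjk]
    have : ∀ i i' : Fin m, (if ((i : Fin m), j) = (i', k) then 1 - q j ^ 2 else 0) = 0 := by
      intro i i'
      rw [if_neg (by simp [Prod.ext_iff]; intro _; exact hjk)]
    refine Finset.sum_eq_zero (fun i _ => ?_)
    rw [Finset.sum_congr rfl (fun i' _ => this i i'), Finset.sum_const, smul_zero]

end PGLB
namespace PGLB
open Finset MeasureTheory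

variable {d m : ℕ}

lemma sum_wgt_abs_le {q : Fin d → ℝ} (hq : ∀ j, |q j| ≤ 1)
    (x : (Fin m → Fin d → Bool) → ℝ) {C : ℝ}
    (hC : ∑ b : Fin m → Fin d → Bool, wgt q b * (x b) ^ 2 ≤ C) :
    ∑ b : Fin m → Fin d → Bool, wgt q b * |x b| ≤ Real.sqrt C := by
  have hw : ∀ b : Fin m → Fin d → Bool, 0 ≤ wgt q b := wgt_nonneg hq
  have h0 : 0 ≤ ∑ b : Fin m → Fin d → Bool, wgt q b * |x b| :=
    Finset.sum_nonneg (fun b _ => mul_nonneg (hw b) (abs_nonneg _))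
  have hCS := Finset.sum_mul_sq_le_sq_mul_sq Finset.univ
    (fun b : Fin m → Fin d → Bool => Real.sqrt (wgt q b))
    (fun b => Real.sqrt (wgt q b) * |x b|)
  have e1 : ∀ b : Fin m → Fin d → Bool,
      Real.sqrt (wgt q b) * (Real.sqrt (wgt q b) * |x b|) = wgt q b * |x b| := by
    intro b; rw [← mul_assoc, Real.mul_self_sqrt (hw b)]
  have e2 : ∀ b : Fin m → Fin d → Bool, (Real.sqrt (wgt q b)) ^ 2 = wgt q b := by
    intro b; rw [Real.sq_sqrt (hw b)]
  have e3 : ∀ b : Fin m → Fin d → Bool,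
      (Real.sqrt (wgt q b) * |x b|) ^ 2 = wgt q b * (x b) ^ 2 := by
    intro b; rw [mul_pow, Real.sq_sqrt (hw b), sq_abs]
  rw [Finset.sum_congr rfl (fun b _ => e1 b), Finset.sum_congr rfl (fun b _ => e2 b),
    Finset.sum_congr rfl (fun b _ => e3 b), wgt_total] at hCS
  rw [one_mul] at hCS
  have hsq : (∑ b : Fin m → Fin d → Bool, wgt q b * |x b|) ^ 2 ≤ C := le_trans hCS hC
  have hC0 : 0 ≤ C := le_trans (sq_nonneg _) hsq
  calc ∑ b : Fin m → Fin d → Bool, wgt q b * |x b|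
      = Real.sqrt ((∑ b : Fin m → Fin d → Bool, wgt q b * |x b|) ^ 2) :=
        (Real.sqrt_sq h0).symm
    _ ≤ Real.sqrt C := Real.sqrt_le_sqrt hsq

lemma absY_le {q : Fin d → ℝ} (hq : ∀ j, |q j| ≤ 1) (j : Fin d) :
    ∑ b : Fin m → Fin d → Bool, wgt q b * |Ys j b - m * q j| ≤ Real.sqrt m := by
  refine sum_wgt_abs_le hq _ ?_
  have := momentYY (m := m) q j j
  rw [if_pos rfl] at this
  have e : ∀ b : Fin m → Fin d → Bool,
      wgt q b * (Ys j b - m * q j) ^ 2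
        = wgt q b * ((Ys j b - m * q j) * (Ys j b - m * q j)) := by
    intro b; ring
  rw [Finset.sum_congr rfl (fun b _ => e b), this]
  have h1 : (0:ℝ) ≤ q j ^ 2 := sq_nonneg _
  nlinarith [Nat.cast_nonneg (α := ℝ) m]

lemma Zsq_le {q : Fin d → ℝ} (hq : ∀ j, |q j| ≤ 1) (c : Fin d → ℝ) (hc : ∀ j, |c j| ≤ 1) :
    ∑ b : Fin m → Fin d → Bool, wgt q b * (∑ j, c j * (Ys j b - m * q j)) ^ 2
      ≤ (d : ℝ) * m := by
  have expand : ∀ b : Fin m → Fin d → Bool,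
      wgt q b * (∑ j, c j * (Ys j b - m * q j)) ^ 2
        = ∑ j, ∑ k, (c j * c k) *
            (wgt q b * ((Ys j b - m * q j) * (Ys k b - m * q k))) := by
    intro b
    rw [sq, Finset.sum_mul_sum, Finset.mul_sum]
    refine Finset.sum_congr rfl (fun j _ => ?_)
    rw [Finset.mul_sum]
    refine Finset.sum_congr rfl (fun k _ => ?_)
    ring
  rw [Finset.sum_congr rfl (fun b _ => expand b)]
  rw [Finset.sum_comm]
  have swap : ∀ j : Fin d, (∑ b : Fin m → Fin d → Bool, ∑ k, (c j * c k) *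
      (wgt q b * ((Ys j b - m * q j) * (Ys k b - m * q k))))
      = ∑ k, (c j * c k) * (if j = k then (m:ℝ) * (1 - q j ^ 2) else 0) := by
    intro j
    rw [Finset.sum_comm]
    refine Finset.sum_congr rfl (fun k _ => ?_)
    rw [← Finset.mul_sum, momentYY]
  rw [Finset.sum_congr rfl (fun j _ => swap j)]
  have perj : ∀ j : Fin d, (∑ k, (c j * c k) * (if j = k then (m:ℝ) * (1 - q j ^ 2) else 0))
      ≤ (m : ℝ) := by
    intro j
    have : ∀ k : Fin d, (c j * c k) * (if j = k then (m:ℝ) * (1 - q j ^ 2) else 0)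
        = if k = j then (c j * c j) * ((m:ℝ) * (1 - q j ^ 2)) else 0 := by
      intro k
      by_cases h : k = j
      · subst h; simp
      · rw [if_neg (Ne.symm h), if_neg h, mul_zero]
    rw [Finset.sum_congr rfl (fun k _ => this k), Finset.sum_ite_eq' Finset.univ j]
    rw [if_pos (Finset.mem_univ j)]
    have h1 : c j * c j ≤ 1 := by
      have := abs_mul_abs_self (c j)
      nlinarith [hc j, abs_nonneg (c j)]
    have h2 : 0 ≤ c j * c j := mul_self_nonneg _
    have h3 : (0:ℝ) ≤ (m:ℝ) := Nat.cast_nonneg m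
    have hqj : |q j| ≤ 1 := hq j
    have h4' : q j ^ 2 ≤ 1 := by nlinarith [sq_abs (q j), abs_nonneg (q j)]
    have h4 : 0 ≤ 1 - q j ^ 2 := by linarith
    have h5 : (m:ℝ) * (1 - q j ^ 2) ≤ (m:ℝ) := by nlinarith [sq_nonneg (q j)]
    nlinarith
  calc (∑ j, ∑ k, (c j * c k) * (if j = k then (m:ℝ) * (1 - q j ^ 2) else 0))
      ≤ ∑ j : Fin d, (m:ℝ) := Finset.sum_le_sum (fun j _ => perj j)
    _ = (d : ℝ) * m := by rw [Finset.sum_const, card_univ, Fintype.card_fin, nsmul_eq_mul]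

lemma sum_wgt_Zplus_le {q : Fin d → ℝ} (hq : ∀ j, |q j| ≤ 1) (c : Fin d → ℝ)
    (hc : ∀ j, |c j| ≤ 1) :
    ∑ b : Fin m → Fin d → Bool, wgt q b * max (∑ j, c j * (Ys j b - m * q j)) 0
      ≤ Real.sqrt ((d : ℝ) * m) := by
  have step1 : ∑ b : Fin m → Fin d → Bool, wgt q b * max (∑ j, c j * (Ys j b - m * q j)) 0
      ≤ ∑ b : Fin m → Fin d → Bool, wgt q b * |∑ j, c j * (Ys j b - m * q j)| := by
    refine Finset.sum_le_sum (fun b _ => ?_)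
    refine mul_le_mul_of_nonneg_left ?_ (wgt_nonneg hq b)
    exact max_le (le_abs_self _) (abs_nonneg _)
  exact le_trans step1 (sum_wgt_abs_le hq _ (Zsq_le hq c hc))

end PGLB
namespace PGLB
open Finset MeasureTheory ENNReal
open scoped Classical

variable {d m : ℕ}

lemma exists_meas_ext {α M : Type*} [MeasurableSpace α] [MeasurableSingletonClass α]
    [MeasurableSpace M] (f : α → M) (F : Finset α) (y₀ : M) :
    ∃ g : α → M, Measurable g ∧ ∀ x ∈ F, g x = f x := by
  classical
  induction F using Finset.induction with
  | empty => exact ⟨fun _ => y₀, measurable_const, by simp⟩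
  | @insert a F ha ih =>
    obtain ⟨g, hg, hgf⟩ := ih
    refine ⟨fun x => if x = a then f a else g x, ?_, ?_⟩
    · exact Measurable.ite (measurableSet_eq) measurable_const hg
    · intro x hx
      rcases Finset.mem_insert.1 hx with h | h
      · subst h; simp
      · by_cases hxa : x = a
        · subst hxa; simp
        · simpa [if_neg hxa] using hgf x h

/-- The support atoms of the sample distribution. -/
def Atoms (d m : ℕ) : Finset (Fin m → Fin d → ℝ) :=
  Finset.image emb Finset.univ

lemma iid_null_off_atoms {q : Fin d → ℝ} (hq : ∀ j, |q j| ≤ 1) :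
    (iidSample (radProduct d q) m) ((↑(Atoms d m) : Set (Fin m → Fin d → ℝ))ᶜ) = 0 := by
  rw [iid_atomic q hq, Measure.coe_finset_sum]
  simp only [Finset.sum_apply, Measure.smul_apply, smul_eq_mul]
  refine Finset.sum_eq_zero (fun b _ => ?_)
  rw [Measure.dirac_apply' _ (((Atoms d m).finite_toSet.measurableSet).compl)]
  rw [Set.indicator_apply, if_neg, mul_zero]
  simp only [Set.mem_compl_iff, not_not, Finset.mem_coe]
  exact Finset.mem_image.2 ⟨b, Finset.mem_univ b, rfl⟩

lemma bind_atomic {Y : Type*} [MeasurableSpace Y] {q : Fin d → ℝ} (hq : ∀ j, |q j| ≤ 1)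
    (A : (Fin m → Fin d → ℝ) → Measure Y) {O : Set Y} (hO : MeasurableSet O) :
    (iidSample (radProduct d q) m).bind A O
      = ∑ b : Fin m → Fin d → Bool, ENNReal.ofReal (wgt q b) * (A (emb b) O) := by
  classical
  obtain ⟨g, hg, hgf⟩ := exists_meas_ext A (Atoms d m) 0
  have hae : A =ᵐ[iidSample (radProduct d q) m] g := by
    rw [Filter.eventuallyEq_iff_exists_mem]
    refine ⟨(↑(Atoms d m) : Set (Fin m → Fin d → ℝ)), ?_, ?_⟩
    · rw [mem_ae_iff, iid_null_off_atoms hq]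
    · intro S hS
      exact (hgf S (Finset.mem_coe.1 hS)).symm
  have hbind : (iidSample (radProduct d q) m).bind A
      = (iidSample (radProduct d q) m).bind g := by
    unfold Measure.bind
    rw [Measure.map_congr hae]
  rw [hbind, Measure.bind_apply hO hg.aemeasurable, iid_atomic q hq, lintegral_finset_sum_measure]
  refine Finset.sum_congr rfl (fun b _ => ?_)
  rw [lintegral_smul_measure, lintegral_dirac (emb b) (fun S => g S O)]
  rw [hgf (emb b) (Finset.mem_image.2 ⟨b, Finset.mem_univ b, rfl⟩), smul_eq_mul]

lemma bind_atomic_real {Y : Type*} [MeasurableSpace Y] {q : Fin d → ℝ} (hq : ∀ j, |q j| ≤ 1)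
    (A : (Fin m → Fin d → ℝ) → Measure Y) (hA : ∀ S, IsProbabilityMeasure (A S))
    {O : Set Y} (hO : MeasurableSet O) :
    ((iidSample (radProduct d q) m).bind A O).toReal
      = ∑ b : Fin m → Fin d → Bool, wgt q b * (A (emb b) O).toReal := by
  rw [bind_atomic hq A hO, ENNReal.toReal_sum]
  · refine Finset.sum_congr rfl (fun b _ => ?_)
    rw [ENNReal.toReal_mul, ENNReal.toReal_ofReal (wgt_nonneg hq b)]
  · intro b _
    exact ENNReal.mul_ne_top ofReal_ne_top (measure_ne_top _ _)

lemma measure_le_filter {q : Fin d → ℝ} (hq : ∀ j, |q j| ≤ 1)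
    (E : Set (Fin m → Fin d → ℝ)) :
    ((iidSample (radProduct d q) m) E).toReal
      ≤ ∑ b ∈ Finset.univ.filter (fun b : Fin m → Fin d → Bool => emb b ∈ E), wgt q b := by
  classical
  set μ := iidSample (radProduct d q) m
  have hEsub : E ⊆ (E ∩ ↑(Atoms d m)) ∪ (↑(Atoms d m) : Set (Fin m → Fin d → ℝ))ᶜ := by
    intro S hS
    by_cases h : S ∈ (↑(Atoms d m) : Set (Fin m → Fin d → ℝ))
    · exact Or.inl ⟨hS, h⟩
    · exact Or.inr h
  have hEfin : (E ∩ ↑(Atoms d m) : Set (Fin m → Fin d → ℝ)).Finite :=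
    Set.Finite.subset (Atoms d m).finite_toSet Set.inter_subset_right
  have h1 : μ E ≤ μ (E ∩ ↑(Atoms d m)) := by
    calc μ E ≤ μ ((E ∩ ↑(Atoms d m)) ∪ (↑(Atoms d m) : Set (Fin m → Fin d → ℝ))ᶜ) :=
          measure_mono hEsub
      _ ≤ μ (E ∩ ↑(Atoms d m)) + μ ((↑(Atoms d m) : Set (Fin m → Fin d → ℝ))ᶜ) :=
          measure_union_le _ _
      _ = μ (E ∩ ↑(Atoms d m)) := by rw [iid_null_off_atoms hq, add_zero]
  have h2 : μ (E ∩ ↑(Atoms d m))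
      = ∑ b : Fin m → Fin d → Bool,
          (if emb b ∈ E then ENNReal.ofReal (wgt q b) else 0) := by
    rw [show μ = iidSample (radProduct d q) m from rfl, iid_atomic q hq,
      Measure.coe_finset_sum]
    simp only [Finset.sum_apply, Measure.smul_apply, smul_eq_mul]
    refine Finset.sum_congr rfl (fun b _ => ?_)
    rw [Measure.dirac_apply' _ hEfin.measurableSet, Set.indicator_apply]
    by_cases h : emb b ∈ E
    · rw [if_pos h, if_pos ⟨h, Finset.mem_coe.2 (Finset.mem_image.2 ⟨b, Finset.mem_univ b, rfl⟩)⟩,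
        Pi.one_apply, mul_one]
    · rw [if_neg h, if_neg (fun hh => h hh.1), mul_zero]
  have h3 : μ E ≤ ∑ b : Fin m → Fin d → Bool,
      (if emb b ∈ E then ENNReal.ofReal (wgt q b) else 0) := h2 ▸ h1
  have h4 : ((μ : Measure _) E).toReal
      ≤ (∑ b : Fin m → Fin d → Bool,
          (if emb b ∈ E then ENNReal.ofReal (wgt q b) else 0)).toReal := by
    refine ENNReal.toReal_mono ?_ h3
    refine (ENNReal.sum_lt_top.2 (fun b _ => ?_)).ne
    split
    · exact ofReal_lt_top
    · exact zero_lt_top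
  refine le_trans h4 ?_
  rw [ENNReal.toReal_sum (fun b _ => by split <;> simp)]
  rw [Finset.sum_filter]
  refine le_of_eq (Finset.sum_congr rfl (fun b _ => ?_))
  split
  · exact ENNReal.toReal_ofReal (wgt_nonneg hq b)
  · simp

end PGLB
namespace PGLB
open MeasureTheory Set

lemma indist_integral_le {Y : Type*} [MeasurableSpace Y] (P Q : Measure Y)
    [IsProbabilityMeasure P] [IsProbabilityMeasure Q] (Z : Y → ℝ) (hZ : Measurable Z)
    {M δ : ℝ} (hM : 0 ≤ M) (hδ : 0 ≤ δ) (hb : ∀ v, |Z v| ≤ M)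
    (hind : ∀ O : Set Y, (P O).toReal ≤ Real.exp 1 * (Q O).toReal + δ) :
    ∫ v, Z v ∂P ≤ Real.exp 1 * (∫ v, max (Z v) 0 ∂Q) + δ * M := by
  set Zp : Y → ℝ := fun v => max (Z v) 0 with hZpdef
  have hZp : Measurable Zp := hZ.max measurable_const
  have hZpnn : ∀ v, 0 ≤ Zp v := fun v => le_max_right _ _
  have hZpb : ∀ v, Zp v ≤ M := fun v =>
    max_le (le_trans (le_abs_self _) (hb v)) hM
  have hint : ∀ (μ : Measure Y) [IsProbabilityMeasure μ], Integrable Zp μ := by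
    intro μ _
    refine Integrable.mono' (integrable_const M) hZp.aestronglyMeasurable ?_
    exact ae_of_all _ (fun v => by
      rw [Real.norm_eq_abs, abs_of_nonneg (hZpnn v)]; exact hZpb v)
  have hintZ : ∀ (μ : Measure Y) [IsProbabilityMeasure μ], Integrable Z μ := by
    intro μ _
    refine Integrable.mono' (integrable_const M) hZ.aestronglyMeasurable ?_
    exact ae_of_all _ (fun v => by rw [Real.norm_eq_abs]; exact hb v)
  have step1 : ∫ v, Z v ∂P ≤ ∫ v, Zp v ∂P :=
    integral_mono (hintZ P) (hint P) (fun v => le_max_left _ _)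
  have layerP : ∫ v, Zp v ∂P = ∫ t in Ioc 0 M, ((P {v | t ≤ Zp v}).toReal) :=
    Integrable.integral_eq_integral_Ioc_meas_le (hint P) (ae_of_all _ hZpnn)
      (ae_of_all _ hZpb)
  have layerQ : ∫ v, Zp v ∂Q = ∫ t in Ioc 0 M, ((Q {v | t ≤ Zp v}).toReal) :=
    Integrable.integral_eq_integral_Ioc_meas_le (hint Q) (ae_of_all _ hZpnn)
      (ae_of_all _ hZpb)
  have hmeasP : Measurable (fun t => (P {v | t ≤ Zp v}).toReal) := by
    refine Measurable.ennreal_toReal ?_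
    exact Antitone.measurable (fun t₁ t₂ h12 =>
      measure_mono (fun v hv => le_trans h12 hv))
  have hmeasQ : Measurable (fun t => (Q {v | t ≤ Zp v}).toReal) := by
    refine Measurable.ennreal_toReal ?_
    exact Antitone.measurable (fun t₁ t₂ h12 =>
      measure_mono (fun v hv => le_trans h12 hv))
  have hIocfin : volume (Ioc (0:ℝ) M) ≠ ⊤ := by
    rw [Real.volume_Ioc]; exact ENNReal.ofReal_ne_top
  have hintP : IntegrableOn (fun t => (P {v | t ≤ Zp v}).toReal) (Ioc 0 M) volume := by
    refine Measure.integrableOn_of_bounded (M := 1) hIocfin hmeasP.aestronglyMeasurable ?_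
    refine ae_of_all _ (fun t => ?_)
    rw [Real.norm_eq_abs, abs_of_nonneg ENNReal.toReal_nonneg]
    exact (ENNReal.toReal_le_of_le_ofReal zero_le_one (by
      simpa using prob_le_one (μ := P) (s := {v | t ≤ Zp v})))
  have hintQ : IntegrableOn (fun t => (Q {v | t ≤ Zp v}).toReal) (Ioc 0 M) volume := by
    refine Measure.integrableOn_of_bounded (M := 1) hIocfin hmeasQ.aestronglyMeasurable ?_
    refine ae_of_all _ (fun t => ?_)
    rw [Real.norm_eq_abs, abs_of_nonneg ENNReal.toReal_nonneg]
    exact (ENNReal.toReal_le_of_le_ofReal zero_le_one (by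
      simpa using prob_le_one (μ := Q) (s := {v | t ≤ Zp v})))
  have step2 : ∫ t in Ioc 0 M, ((P {v | t ≤ Zp v}).toReal)
      ≤ ∫ t in Ioc 0 M, (Real.exp 1 * (Q {v | t ≤ Zp v}).toReal + δ) := by
    refine setIntegral_mono_on hintP ?_ measurableSet_Ioc (fun t _ => hind _)
    exact (hintQ.const_mul (Real.exp 1)).add (integrableOn_const (by
      rw [Real.volume_Ioc]; exact ENNReal.ofReal_ne_top))
  have step3 : ∫ t in Ioc 0 M, (Real.exp 1 * (Q {v | t ≤ Zp v}).toReal + δ)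
      = Real.exp 1 * (∫ t in Ioc 0 M, ((Q {v | t ≤ Zp v}).toReal)) + δ * M := by
    rw [integral_add (hintQ.const_mul (Real.exp 1)) (integrableOn_const (by
      rw [Real.volume_Ioc]; exact ENNReal.ofReal_ne_top))]
    rw [MeasureTheory.integral_const_mul, setIntegral_const, measureReal_def, Real.volume_Ioc, sub_zero,
      ENNReal.toReal_ofReal hM, smul_eq_mul, mul_comm M δ]
  calc ∫ v, Z v ∂P ≤ ∫ v, Zp v ∂P := step1
    _ = ∫ t in Ioc 0 M, ((P {v | t ≤ Zp v}).toReal) := layerP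
    _ ≤ ∫ t in Ioc 0 M, (Real.exp 1 * (Q {v | t ≤ Zp v}).toReal + δ) := step2
    _ = Real.exp 1 * (∫ t in Ioc 0 M, ((Q {v | t ≤ Zp v}).toReal)) + δ * M := step3
    _ = Real.exp 1 * (∫ v, Zp v ∂Q) + δ * M := by rw [← layerQ]

end PGLB
namespace PGLB
open Finset MeasureTheory
open scoped Classical

variable {d m : ℕ}

/-- The accuracy target set. -/
def Gset (q : Fin d → ℝ) : Set (Fin d → ℝ) := {v | ∀ j, |v j - q j| ≤ 0.01}

lemma Gset_measurable (q : Fin d → ℝ) : MeasurableSet (Gset q) := by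
  have : Gset q = ⋂ j, {v : Fin d → ℝ | |v j - q j| ≤ 0.01} := by
    ext v; simp [Gset, Set.mem_iInter]
  rw [this]
  refine MeasurableSet.iInter (fun j => ?_)
  have : Measurable (fun v : Fin d → ℝ => |v j - q j|) :=
    ((measurable_pi_apply j).sub measurable_const).abs
  exact measurableSet_le this measurable_const

section WithA

variable (A : (Fin m → (Fin d → ℝ)) → Measure (Fin d → ℝ))

/-- clipped mean of coordinate `j` of the output on the dataset indexed by `b`. -/
def ajv (b : Fin m → Fin d → Bool) (j : Fin d) : ℝ := ∫ v, clip (v j) ∂(A (emb b))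

/-- The fingerprinting statistic, averaged over data at mean vector `q`. -/
def Phi (q : Fin d → ℝ) : ℝ :=
  ∑ b : Fin m → Fin d → Bool, wgt q b * ∑ j, ajv A b j * (Ys j b - m * q j)

lemma clip_integrable (hA : ∀ S, IsProbabilityMeasure (A S)) (b : Fin m → Fin d → Bool) (j : Fin d) :
    Integrable (fun v : Fin d → ℝ => clip (v j)) (A (emb b)) := by
  haveI := hA (emb b)
  refine Integrable.mono' (integrable_const 1)
    ((measurable_clip.comp (measurable_pi_apply j)).aestronglyMeasurable) ?_
  exact ae_of_all _ (fun v => by rw [Real.norm_eq_abs]; exact abs_clip_le _)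

lemma ajv_abs_le (hA : ∀ S, IsProbabilityMeasure (A S)) (b : Fin m → Fin d → Bool) (j : Fin d) : |ajv A b j| ≤ 1 := by
  haveI := hA (emb b)
  calc |ajv A b j| ≤ ∫ v, |clip (v j)| ∂(A (emb b)) := by
        simpa [Real.norm_eq_abs, ajv] using
          norm_integral_le_integral_norm (μ := A (emb b)) (fun v => clip (v j))
    _ ≤ ∫ _v, (1:ℝ) ∂(A (emb b)) := by
        refine integral_mono ((clip_integrable A hA b j).abs) (integrable_const 1) ?_
        exact fun v => abs_clip_le _
    _ = 1 := by simp
  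
/-- Accuracy implies the clipped conditional means track `q` in the box. -/
lemma Fj_bound (hA : ∀ S, IsProbabilityMeasure (A S)) (hacc : AccurateOWM d m A 0.01 0.01) {q : Fin d → ℝ}
    (hq : ∀ j, |q j| ≤ 3⁻¹) (j : Fin d) :
    |(∑ b : Fin m → Fin d → Bool, wgt q b * ajv A b j) - q j| ≤ 7/300 := by
  have hq1 : ∀ j', |q j'| ≤ 1 := fun j' => le_trans (hq j') (by norm_num)
  have haccq := hacc q hq1
  rw [show {v : Fin d → ℝ | ∀ j', |v j' - q j'| ≤ 0.01} = Gset q from rfl] at haccq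
  rw [bind_atomic_real hq1 A hA (Gset_measurable q)] at haccq
  set PG : (Fin m → Fin d → Bool) → ℝ := fun b => (A (emb b) (Gset q)).toReal with hPG
  have hPG01 : ∀ b, 0 ≤ PG b ∧ PG b ≤ 1 := by
    intro b
    haveI := hA (emb b)
    exact ⟨ENNReal.toReal_nonneg, by
      rw [hPG]
      exact ENNReal.toReal_le_of_le_ofReal zero_le_one (by simpa using prob_le_one)⟩
  -- per-atom bound
  have key : ∀ b : Fin m → Fin d → Bool, |ajv A b j - q j| ≤ 1/100 + (4/3) * (1 - PG b) := by
    intro b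
    haveI := hA (emb b)
    have hint : Integrable (fun v : Fin d → ℝ => clip (v j) - q j) (A (emb b)) :=
      (clip_integrable A hA b j).sub (integrable_const _)
    have e1 : ajv A b j - q j = ∫ v, (clip (v j) - q j) ∂(A (emb b)) := by
      rw [integral_sub (clip_integrable A hA b j) (integrable_const _), integral_const]
      simp [ajv]
    rw [e1]
    have habs : |∫ v, (clip (v j) - q j) ∂(A (emb b))|
        ≤ ∫ v, |clip (v j) - q j| ∂(A (emb b)) := by
      simpa [Real.norm_eq_abs] using
        norm_integral_le_integral_norm (μ := A (emb b)) (fun v => clip (v j) - q j)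
    refine le_trans habs ?_
    have hsplit : ∫ v, |clip (v j) - q j| ∂(A (emb b))
        = (∫ v in Gset q, |clip (v j) - q j| ∂(A (emb b)))
          + ∫ v in (Gset q)ᶜ, |clip (v j) - q j| ∂(A (emb b)) := by
      rw [integral_add_compl (Gset_measurable q) hint.abs]
    rw [hsplit]
    have hbound1 : ∫ v in Gset q, |clip (v j) - q j| ∂(A (emb b)) ≤ (1/100) * PG b := by
      have : ∀ v ∈ Gset q, |clip (v j) - q j| ≤ 1/100 := by
        intro v hv
        have hvj : |v j - q j| ≤ 0.01 := hv j
        have : |v j| ≤ 1 := by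
          have := abs_sub_abs_le_abs_sub (v j) (q j)
          have hqj := hq j
          rw [show (0.01:ℝ) = 1/100 by norm_num] at hvj
          nlinarith [abs_nonneg (v j - q j)]
        rw [clip_eq_self this]
        rw [show (0.01:ℝ) = 1/100 by norm_num] at hvj
        exact hvj
      calc ∫ v in Gset q, |clip (v j) - q j| ∂(A (emb b))
          ≤ ∫ _v in Gset q, (1/100 : ℝ) ∂(A (emb b)) := by
            refine setIntegral_mono_on hint.abs.integrableOn
              (integrableOn_const (measure_ne_top _ _))
              (Gset_measurable q) this
        _ = (1/100) * PG b := by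
            rw [setIntegral_const, smul_eq_mul, mul_comm]; rfl
    have hbound2 : ∫ v in (Gset q)ᶜ, |clip (v j) - q j| ∂(A (emb b))
        ≤ (4/3) * (1 - PG b) := by
      have hptw : ∀ v ∈ (Gset q)ᶜ, |clip (v j) - q j| ≤ 4/3 := by
        intro v _
        have h1 := abs_clip_le (v j)
        have h2 := hq j
        calc |clip (v j) - q j| ≤ |clip (v j)| + |q j| := abs_sub _ _
          _ ≤ 4/3 := by linarith
      have hcompl : (A (emb b) ((Gset q)ᶜ)).toReal = 1 - PG b := by
        rw [measure_compl (Gset_measurable q) (measure_ne_top _ _), measure_univ,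
          ENNReal.toReal_sub_of_le prob_le_one ENNReal.one_ne_top]
        simp [hPG]
      calc ∫ v in (Gset q)ᶜ, |clip (v j) - q j| ∂(A (emb b))
          ≤ ∫ _v in (Gset q)ᶜ, (4/3 : ℝ) ∂(A (emb b)) := by
            refine setIntegral_mono_on hint.abs.integrableOn
              (integrableOn_const (measure_ne_top _ _))
              (Gset_measurable q).compl hptw
        _ = (4/3) * (1 - PG b) := by
            rw [setIntegral_const, smul_eq_mul, measureReal_def, hcompl]
            ring
    linarith [(hPG01 b).1, (hPG01 b).2]
  -- aggregate
  have hsum : |(∑ b : Fin m → Fin d → Bool, wgt q b * ajv A b j) - q j|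
      ≤ ∑ b : Fin m → Fin d → Bool, wgt q b * |ajv A b j - q j| := by
    have e2 : (∑ b : Fin m → Fin d → Bool, wgt q b * ajv A b j) - q j
        = ∑ b : Fin m → Fin d → Bool, wgt q b * (ajv A b j - q j) := by
      rw [Finset.sum_congr rfl (fun b _ => mul_sub (wgt q b) (ajv A b j) (q j)),
        Finset.sum_sub_distrib, ← Finset.sum_mul, wgt_total, one_mul]
    rw [e2]
    refine le_trans (Finset.abs_sum_le_sum_abs _ _) ?_
    refine le_of_eq (Finset.sum_congr rfl (fun b _ => ?_))
    rw [abs_mul, abs_of_nonneg (wgt_nonneg (fun j' => le_trans (hq j') (by norm_num)) b)]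
  refine le_trans hsum ?_
  have hq1' : ∀ j', |q j'| ≤ 1 := fun j' => le_trans (hq j') (by norm_num)
  calc ∑ b : Fin m → Fin d → Bool, wgt q b * |ajv A b j - q j|
      ≤ ∑ b : Fin m → Fin d → Bool, wgt q b * (1/100 + (4/3) * (1 - PG b)) := by
        refine Finset.sum_le_sum (fun b _ => ?_)
        exact mul_le_mul_of_nonneg_left (key b) (wgt_nonneg hq1' b)
    _ = 1/100 + (4/3) * (1 - ∑ b : Fin m → Fin d → Bool, wgt q b * PG b) := by
        have expand : ∀ b : Fin m → Fin d → Bool,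
            wgt q b * (1/100 + (4/3) * (1 - PG b))
              = (1/100 + 4/3) * wgt q b - (4/3) * (wgt q b * PG b) := by
          intro b; ring
        rw [Finset.sum_congr rfl (fun b _ => expand b), Finset.sum_sub_distrib,
          ← Finset.mul_sum, ← Finset.mul_sum, wgt_total]
        ring
    _ ≤ 7/300 := by
        have h99 : (99/100 : ℝ) ≤ ∑ b : Fin m → Fin d → Bool, wgt q b * PG b := by
          rw [show (99/100:ℝ) = 1 - 0.01 by norm_num]
          exact haccq
        linarith

end WithA
end PGLB
namespace PGLB
open Finset MeasureTheory
open scoped Classical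

variable {d m : ℕ}

section UpperBound

variable (A : (Fin m → (Fin d → ℝ)) → Measure (Fin d → ℝ))

lemma Phi_le (hA : ∀ S, IsProbabilityMeasure (A S)) {q : Fin d → ℝ}
    (hq : ∀ j, |q j| ≤ 3⁻¹) {δ β : ℝ} (hδ : 0 ≤ δ) (hβ : 0 ≤ β)
    (Sim : Measure (Fin d → ℝ)) (hSim : IsProbabilityMeasure Sim)
    (hPG : 1 - β ≤ ((iidSample (radProduct d q) m) {S | Indist 1 δ (A S) Sim}).toReal) :
    Phi A q ≤ Real.exp 1 * Real.sqrt (d * m) + δ * (d * Real.sqrt m)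
      + β * ((4/3) * d * m) := by
  classical
  haveI := hSim
  have hq1 : ∀ j', |q j'| ≤ 1 := fun j' => le_trans (hq j') (by norm_num)
  set T : Finset (Fin m → Fin d → Bool) :=
    Finset.univ.filter (fun b => Indist 1 δ (A (emb b)) Sim) with hTdef
  have hTmass : 1 - β ≤ ∑ b ∈ T, wgt q b := by
    refine le_trans hPG (le_trans (measure_le_filter hq1 {S | Indist 1 δ (A S) Sim}) ?_)
    exact le_of_eq rfl
  have hTc : ∑ b ∈ Finset.univ \ T, wgt q b ≤ β := by
    have htot := Finset.sum_sdiff (f := fun b => wgt q b) (Finset.filter_subset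
      (fun b => Indist 1 δ (A (emb b)) Sim) Finset.univ)
    rw [wgt_total] at htot
    rw [hTdef]
    linarith [hTmass]
  set Yb : (Fin m → Fin d → Bool) → Fin d → ℝ := fun b j => Ys j b - m * q j with hYbdef
  set Zb : (Fin m → Fin d → Bool) → (Fin d → ℝ) → ℝ :=
    fun b v => ∑ j, clip (v j) * Yb b j with hZbdef
  set Mb : (Fin m → Fin d → Bool) → ℝ := fun b => ∑ j, |Yb b j| with hMbdef
  have hZmeas : ∀ b, Measurable (Zb b) := by
    intro b
    exact Finset.measurable_sum _ (fun j _ =>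
      (measurable_clip.comp (measurable_pi_apply j)).mul_const (Yb b j))
  have hZbd : ∀ b v, |Zb b v| ≤ Mb b := by
    intro b v
    refine le_trans (Finset.abs_sum_le_sum_abs _ _) (Finset.sum_le_sum (fun j _ => ?_))
    rw [abs_mul]
    exact mul_le_of_le_one_left (abs_nonneg _) (abs_clip_le _)
  have hMb0 : ∀ b, 0 ≤ Mb b := fun b => Finset.sum_nonneg (fun j _ => abs_nonneg _)
  have hMble : ∀ b, Mb b ≤ (4/3) * d * m := by
    intro b
    have perj : ∀ j : Fin d, |Yb b j| ≤ (4/3) * m := by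
      intro j
      have h1 : |Ys j b| ≤ (m : ℝ) := by
        refine le_trans (Finset.abs_sum_le_sum_abs _ _) ?_
        rw [Finset.sum_congr rfl (fun i _ => abs_eb (b i j)), Finset.sum_const, card_univ,
          Fintype.card_fin, nsmul_eq_mul, mul_one]
      have h2 : |(m:ℝ) * q j| ≤ (m:ℝ) * 3⁻¹ := by
        rw [abs_mul, Nat.abs_cast]
        exact mul_le_mul_of_nonneg_left (hq j) (Nat.cast_nonneg m)
      calc |Yb b j| ≤ |Ys j b| + |(m:ℝ) * q j| := abs_sub _ _
        _ ≤ (m:ℝ) + (m:ℝ) * 3⁻¹ := add_le_add h1 h2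
        _ ≤ (4/3) * m := by nlinarith [Nat.cast_nonneg (α := ℝ) m]
    calc Mb b ≤ ∑ _j : Fin d, (4/3) * (m:ℝ) := Finset.sum_le_sum (fun j _ => perj j)
      _ = (4/3) * d * m := by
          rw [Finset.sum_const, card_univ, Fintype.card_fin, nsmul_eq_mul]; ring
  have hZint : ∀ b (μ : Measure (Fin d → ℝ)) [IsProbabilityMeasure μ],
      Integrable (Zb b) μ := by
    intro b μ _
    refine Integrable.mono' (integrable_const (Mb b)) (hZmeas b).aestronglyMeasurable ?_
    exact ae_of_all _ (fun v => by rw [Real.norm_eq_abs]; exact hZbd b v)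
  have hIb : ∀ b, ∫ v, Zb b v ∂(A (emb b)) = ∑ j, ajv A b j * Yb b j := by
    intro b
    haveI := hA (emb b)
    rw [hZbdef]
    rw [integral_finset_sum _ (fun j _ => ((clip_integrable A hA b j).mul_const (Yb b j)))]
    exact Finset.sum_congr rfl (fun j _ => by rw [integral_mul_const]; rfl)
  have hPhi : Phi A q = ∑ b : Fin m → Fin d → Bool, wgt q b * ∫ v, Zb b v ∂(A (emb b)) := by
    unfold Phi
    exact Finset.sum_congr rfl (fun b _ => by rw [hIb b])
  -- per-atom comparisons
  have hUT : ∀ b ∈ T, ∫ v, Zb b v ∂(A (emb b))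
      ≤ Real.exp 1 * (∫ v, max (Zb b v) 0 ∂Sim) + δ * Mb b := by
    intro b hb
    haveI := hA (emb b)
    have hind : ∀ O : Set (Fin d → ℝ),
        ((A (emb b)) O).toReal ≤ Real.exp 1 * (Sim O).toReal + δ := by
      intro O
      have h1 := ((Finset.mem_filter.1 hb).2 O).1
      have hkey : Real.exp 1 * Real.exp (-1) = 1 := by
        rw [← Real.exp_add]; norm_num
      have h2 := mul_le_mul_of_nonneg_left h1 (Real.exp_pos 1).le
      rw [← mul_assoc, hkey, one_mul] at h2
      linarith
    exact indist_integral_le (A (emb b)) Sim (Zb b) (hZmeas b) (hMb0 b) hδ (hZbd b) hind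
  have hUnotT : ∀ b, ∫ v, Zb b v ∂(A (emb b)) ≤ Mb b := by
    intro b
    haveI := hA (emb b)
    calc ∫ v, Zb b v ∂(A (emb b)) ≤ ∫ _v, Mb b ∂(A (emb b)) := by
          refine integral_mono (hZint b _) (integrable_const _) ?_
          exact fun v => le_trans (le_abs_self _) (hZbd b v)
      _ = Mb b := by simp
  -- the three aggregate bounds
  have hSimIntNN : ∀ b, 0 ≤ ∫ v, max (Zb b v) 0 ∂Sim := by
    intro b
    exact integral_nonneg (fun v => le_max_right _ _)
  have hBound1 : ∑ b : Fin m → Fin d → Bool, wgt q b * ∫ v, max (Zb b v) 0 ∂Sim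
      ≤ Real.sqrt ((d:ℝ) * m) := by
    have hswap : ∑ b : Fin m → Fin d → Bool, wgt q b * ∫ v, max (Zb b v) 0 ∂Sim
        = ∫ v, (∑ b : Fin m → Fin d → Bool, wgt q b * max (Zb b v) 0) ∂Sim := by
      rw [integral_finset_sum _ (fun b _ => ((hZint b Sim).pos_part.const_mul (wgt q b)))]
      exact Finset.sum_congr rfl (fun b _ => by rw [integral_const_mul])
    rw [hswap]
    have hptw : ∀ v : Fin d → ℝ,
        (∑ b : Fin m → Fin d → Bool, wgt q b * max (Zb b v) 0) ≤ Real.sqrt ((d:ℝ) * m) := by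
      intro v
      exact sum_wgt_Zplus_le hq1 (fun j => clip (v j)) (fun j => abs_clip_le _)
    calc ∫ v, (∑ b : Fin m → Fin d → Bool, wgt q b * max (Zb b v) 0) ∂Sim
        ≤ ∫ _v, Real.sqrt ((d:ℝ) * m) ∂Sim := by
          refine integral_mono ?_ (integrable_const _) hptw
          exact integrable_finset_sum _ (fun b _ => ((hZint b Sim).pos_part.const_mul (wgt q b)))
      _ = Real.sqrt ((d:ℝ) * m) := by simp
  have hBound2 : ∑ b : Fin m → Fin d → Bool, wgt q b * Mb b ≤ (d:ℝ) * Real.sqrt m := by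
    have hswap : ∑ b : Fin m → Fin d → Bool, wgt q b * Mb b
        = ∑ j, ∑ b : Fin m → Fin d → Bool, wgt q b * |Yb b j| := by
      rw [Finset.sum_comm]
      exact Finset.sum_congr rfl (fun b _ => by rw [hMbdef, Finset.mul_sum])
    rw [hswap]
    calc ∑ j, ∑ b : Fin m → Fin d → Bool, wgt q b * |Yb b j|
        ≤ ∑ _j : Fin d, Real.sqrt m := Finset.sum_le_sum (fun j _ => absY_le hq1 j)
      _ = (d:ℝ) * Real.sqrt m := by
          rw [Finset.sum_const, card_univ, Fintype.card_fin, nsmul_eq_mul]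
  -- assemble
  have hw0 : ∀ b : Fin m → Fin d → Bool, 0 ≤ wgt q b := wgt_nonneg hq1
  have hsplit := (Finset.sum_sdiff (f := fun b => wgt q b * ∫ v, Zb b v ∂(A (emb b)))
    (Finset.filter_subset (fun b => Indist 1 δ (A (emb b)) Sim) Finset.univ)).symm
  have hpart1 : ∑ b ∈ Finset.univ \ T, wgt q b * ∫ v, Zb b v ∂(A (emb b))
      ≤ β * ((4/3) * d * m) := by
    calc ∑ b ∈ Finset.univ \ T, wgt q b * ∫ v, Zb b v ∂(A (emb b))
        ≤ ∑ b ∈ Finset.univ \ T, wgt q b * ((4/3) * d * m) := by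
          refine Finset.sum_le_sum (fun b _ => ?_)
          exact mul_le_mul_of_nonneg_left (le_trans (hUnotT b) (hMble b)) (hw0 b)
      _ = (∑ b ∈ Finset.univ \ T, wgt q b) * ((4/3) * d * m) := by
          rw [Finset.sum_mul]
      _ ≤ β * ((4/3) * d * m) := by
          refine mul_le_mul_of_nonneg_right hTc ?_
          positivity
  have hpart2 : ∑ b ∈ T, wgt q b * ∫ v, Zb b v ∂(A (emb b))
      ≤ Real.exp 1 * Real.sqrt ((d:ℝ) * m) + δ * ((d:ℝ) * Real.sqrt m) := by
    calc ∑ b ∈ T, wgt q b * ∫ v, Zb b v ∂(A (emb b))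
        ≤ ∑ b ∈ T, wgt q b * (Real.exp 1 * (∫ v, max (Zb b v) 0 ∂Sim) + δ * Mb b) := by
          refine Finset.sum_le_sum (fun b hb => ?_)
          exact mul_le_mul_of_nonneg_left (hUT b hb) (hw0 b)
      _ = Real.exp 1 * (∑ b ∈ T, wgt q b * ∫ v, max (Zb b v) 0 ∂Sim)
          + δ * (∑ b ∈ T, wgt q b * Mb b) := by
          rw [Finset.mul_sum, Finset.mul_sum, ← Finset.sum_add_distrib]
          exact Finset.sum_congr rfl (fun b _ => by ring)
      _ ≤ Real.exp 1 * Real.sqrt ((d:ℝ) * m) + δ * ((d:ℝ) * Real.sqrt m) := by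
          have h1 : ∑ b ∈ T, wgt q b * ∫ v, max (Zb b v) 0 ∂Sim
              ≤ Real.sqrt ((d:ℝ) * m) := by
            refine le_trans (Finset.sum_le_sum_of_subset_of_nonneg
              (Finset.subset_univ T) (fun b _ _ => mul_nonneg (hw0 b) (hSimIntNN b))) hBound1
          have h2 : ∑ b ∈ T, wgt q b * Mb b ≤ (d:ℝ) * Real.sqrt m := by
            refine le_trans (Finset.sum_le_sum_of_subset_of_nonneg
              (Finset.subset_univ T) (fun b _ _ => mul_nonneg (hw0 b) (hMb0 b))) hBound2
          have he := (Real.exp_pos 1).le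
          exact add_le_add (mul_le_mul_of_nonneg_left h1 he)
            (mul_le_mul_of_nonneg_left h2 hδ)
  calc Phi A q
      = ∑ b : Fin m → Fin d → Bool, wgt q b * ∫ v, Zb b v ∂(A (emb b)) := hPhi
    _ = ∑ b ∈ Finset.univ \ T, wgt q b * ∫ v, Zb b v ∂(A (emb b))
        + ∑ b ∈ T, wgt q b * ∫ v, Zb b v ∂(A (emb b)) := hsplit
    _ ≤ β * ((4/3) * d * m)
        + (Real.exp 1 * Real.sqrt ((d:ℝ) * m) + δ * ((d:ℝ) * Real.sqrt m)) :=
        add_le_add hpart1 hpart2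
    _ = Real.exp 1 * Real.sqrt ((d:ℝ) * m) + δ * ((d:ℝ) * Real.sqrt m)
        + β * ((4/3) * d * m) := by ring

end UpperBound
end PGLB
namespace PGLB
open Finset MeasureTheory
open scoped Classical

variable {d m : ℕ}

lemma continuous_colP (j : Fin d) (b : Fin m → Fin d → Bool) :
    Continuous (fun u => colP j u b) := by
  unfold colP
  exact continuous_finset_prod _ (fun i _ => continuous_rho (b i j))

lemma pow_identity (K L : ℕ) (u : ℝ) :
    (1 - u^2) * (((K : ℝ) * ((1+u)/2)^(K-1) * (1/2)) * ((1-u)/2)^L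
      + ((1+u)/2)^K * ((L : ℝ) * ((1-u)/2)^(L-1) * (-(1/2))))
    = ((1+u)/2)^K * ((1-u)/2)^L * (((K : ℝ) - L) - ((K : ℝ) + L) * u) := by
  have hfac : 1 - u^2 = (2 * ((1+u)/2)) * (2 * ((1-u)/2)) := by ring
  cases K with
  | zero =>
    cases L with
    | zero => norm_num
    | succ L0 =>
      simp only [Nat.cast_zero, Nat.succ_sub_one, pow_zero]
      push_cast
      rw [pow_succ ((1-u)/2) L0]
      ring
  | succ K0 =>
    cases L with
    | zero =>
      simp only [Nat.cast_zero, Nat.succ_sub_one, pow_zero]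
      push_cast
      rw [pow_succ ((1+u)/2) K0]
      ring
    | succ L0 =>
      simp only [Nat.succ_sub_one]
      push_cast
      rw [pow_succ ((1+u)/2) K0, pow_succ ((1-u)/2) L0]
      ring

/-- number of `true` entries in column `j`. -/
def Kc (j : Fin d) (b : Fin m → Fin d → Bool) : ℕ :=
  (Finset.univ.filter (fun i : Fin m => b i j = true)).card

def Lc (j : Fin d) (b : Fin m → Fin d → Bool) : ℕ :=
  (Finset.univ.filter (fun i : Fin m => ¬ (b i j = true))).card

lemma KL_card (j : Fin d) (b : Fin m → Fin d → Bool) : Kc j b + Lc j b = m := by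
  rw [Kc, Lc, Finset.card_filter_add_card_filter_not, card_univ, Fintype.card_fin]

lemma colP_eq_pow (j : Fin d) (b : Fin m → Fin d → Bool) (u : ℝ) :
    colP j u b = ((1+u)/2)^(Kc j b) * ((1-u)/2)^(Lc j b) := by
  rw [colP, ← Finset.prod_filter_mul_prod_filter_not Finset.univ (fun i => b i j = true)]
  congr 1
  · rw [Finset.prod_congr rfl (fun i hi => show rho (b i j) u = (1+u)/2 by
      rw [(Finset.mem_filter.1 hi).2]; norm_num [rho, eb]), Finset.prod_const, Kc]
  · rw [Finset.prod_congr rfl (fun i hi => show rho (b i j) u = (1-u)/2 by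
      have h := (Finset.mem_filter.1 hi).2
      rw [Bool.not_eq_true] at h
      rw [h]
      rw [rho]
      norm_num [eb]
      ring), Finset.prod_const, Lc]

lemma Ys_eq_KL (j : Fin d) (b : Fin m → Fin d → Bool) :
    Ys j b = (Kc j b : ℝ) - (Lc j b : ℝ) := by
  rw [Ys, ← Finset.sum_filter_add_sum_filter_not Finset.univ (fun i => b i j = true)]
  have h1 : ∑ i ∈ Finset.univ.filter (fun i : Fin m => b i j = true), eb (b i j)
      = (Kc j b : ℝ) := by
    rw [Finset.sum_congr rfl (fun i hi => show eb (b i j) = 1 by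
      rw [(Finset.mem_filter.1 hi).2]; norm_num [eb]), Finset.sum_const, Kc,
      nsmul_eq_mul, mul_one]
  have h2 : ∑ i ∈ Finset.univ.filter (fun i : Fin m => ¬ (b i j = true)), eb (b i j)
      = -(Lc j b : ℝ) := by
    rw [Finset.sum_congr rfl (fun i hi => show eb (b i j) = -1 by
      have h := (Finset.mem_filter.1 hi).2
      rw [Bool.not_eq_true] at h
      rw [h]; norm_num [eb]), Finset.sum_const, Lc, nsmul_eq_mul]
    ring
  rw [h1, h2]
  ring

lemma colP_F_hasDeriv (j : Fin d) (b : Fin m → Fin d → Bool) (u : ℝ) :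
    HasDerivAt (fun u => (1 - u^2) * colP j u b)
      (colP j u b * (Ys j b - m * u) - 2 * u * colP j u b) u := by
  have hXd : HasDerivAt (fun u : ℝ => (1+u)/2) (1/2) u := by
    simpa using ((hasDerivAt_id u).const_add 1).div_const 2
  have hZd : HasDerivAt (fun u : ℝ => (1-u)/2) (-(1/2)) u := by
    have h : HasDerivAt (fun u : ℝ => (1 + -u)) (-1) u := by
      simpa using ((hasDerivAt_id u).neg.const_add 1)
    have h2 := h.div_const 2
    have hfe : (fun u : ℝ => (1-u)/2) = (fun u : ℝ => (1 + -u)/2) :=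
      funext fun u => by ring
    rw [hfe]
    refine h2.congr_deriv (Eq.symm ?_)
    norm_num
  have hX := hXd.pow (Kc j b)
  have hZ := hZd.pow (Lc j b)
  have hprod := hX.mul hZ
  have hone : HasDerivAt (fun u : ℝ => 1 - u^2) (-(2*u)) u := by
    have : HasDerivAt (fun u : ℝ => 1 + -(u^2)) (-(2*u)) u := by
      have hp := (hasDerivAt_pow 2 u).neg.const_add 1
      simpa using hp
    simpa [sub_eq_add_neg] using this
  have hfull := hone.mul hprod
  have hfun : (fun u => (1 - u^2) * colP j u b)
      = fun u => (1-u^2) * (((1+u)/2)^(Kc j b) * ((1-u)/2)^(Lc j b)) :=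
    funext fun u => by rw [colP_eq_pow]
  rw [hfun]
  refine hfull.congr_deriv (Eq.symm ?_)
  simp only [Pi.mul_apply, Pi.pow_apply]
  rw [colP_eq_pow, Ys_eq_KL]
  have hm : (m:ℝ) = (Kc j b : ℝ) + Lc j b := by
    have h := congrArg (Nat.cast : ℕ → ℝ) (KL_card j b)
    push_cast at h
    linarith
  rw [hm]
  have hid := pow_identity (Kc j b) (Lc j b) u
  linear_combination -hid

lemma cHat_IBP (j : Fin d) (b : Fin m → Fin d → Bool) :
    ∫ u in (-3⁻¹ : ℝ)..3⁻¹, colP j u b * (Ys j b - m * u)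
      = (8/9) * (colP j 3⁻¹ b - colP j (-3⁻¹) b)
        + ∫ u in (-3⁻¹ : ℝ)..3⁻¹, 2 * u * colP j u b := by
  have hcont1 : Continuous (fun u => colP j u b * (Ys j b - m * u)) := by
    exact (continuous_colP j b).mul (by fun_prop)
  have hcont2 : Continuous (fun u : ℝ => 2 * u * colP j u b) := by
    exact (by fun_prop : Continuous (fun u : ℝ => 2 * u)).mul (continuous_colP j b)
  have hftc := intervalIntegral.integral_eq_sub_of_hasDerivAt
    (f := fun u => (1 - u^2) * colP j u b)
    (f' := fun u => colP j u b * (Ys j b - m * u) - 2 * u * colP j u b)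
    (a := (-3⁻¹ : ℝ)) (b := (3⁻¹ : ℝ))
    (fun u _ => colP_F_hasDeriv j b u)
    ((hcont1.sub hcont2).intervalIntegrable _ _)
  rw [intervalIntegral.integral_sub (hcont1.intervalIntegrable _ _)
    (hcont2.intervalIntegrable _ _)] at hftc
  have hval : (1 - (3⁻¹:ℝ)^2) * colP j 3⁻¹ b - (1 - (-3⁻¹:ℝ)^2) * colP j (-3⁻¹) b
      = (8/9) * (colP j 3⁻¹ b - colP j (-3⁻¹) b) := by
    norm_num
    ring
  rw [hval] at hftc
  linarith [hftc]

end PGLB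
namespace PGLB
open Finset MeasureTheory
open scoped Classical

variable {d m : ℕ}

/-- prior-average of a column factor. -/
def cKv (k : Fin d) (b : Fin m → Fin d → Bool) : ℝ :=
  (3/2) * ∫ u in (-3⁻¹ : ℝ)..3⁻¹, colP k u b

/-- prior-average of the own-column fingerprinting factor. -/
def cHv (j : Fin d) (b : Fin m → Fin d → Bool) : ℝ :=
  (3/2) * ∫ u in (-3⁻¹ : ℝ)..3⁻¹, colP j u b * (Ys j b - m * u)

/-- mixed column factor: averaged on `S`, conditioned elsewhere. -/
def fac (S : Finset (Fin d)) (q : Fin d → ℝ) (b : Fin m → Fin d → Bool) (k : Fin d) : ℝ :=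
  if k ∈ S then cKv k b else colP k (q k) b

lemma fac_update_ne (S : Finset (Fin d)) (q : Fin d → ℝ) (b : Fin m → Fin d → Bool)
    {k k₀ : Fin d} (h : k ≠ k₀) (t : ℝ) :
    fac S (Function.update q k₀ t) b k = fac S q b k := by
  unfold fac
  rw [Function.update_of_ne h]

lemma cont_colP_update (k k₀ : Fin d) (b : Fin m → Fin d → Bool) (q : Fin d → ℝ) :
    Continuous (fun t => colP k ((Function.update q k₀ t) k) b) := by
  by_cases h : k = k₀
  · subst h
    simp only [Function.update_self]
    exact continuous_colP k b
  · simp only [Function.update_of_ne h]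
    exact continuous_const

lemma cont_fac_update (S : Finset (Fin d)) (k k₀ : Fin d) (b : Fin m → Fin d → Bool)
    (q : Fin d → ℝ) :
    Continuous (fun t => fac S (Function.update q k₀ t) b k) := by
  unfold fac
  by_cases hk : k ∈ S
  · simp only [if_pos hk]; exact continuous_const
  · simp only [if_neg hk]; exact cont_colP_update k k₀ b q

lemma prod_fac_update (S : Finset (Fin d)) (q : Fin d → ℝ) (b : Fin m → Fin d → Bool)
    {j k₀ : Fin d} (hk₀ : k₀ ∉ S) (hjk : j ≠ k₀) (t : ℝ) :
    ∏ k ∈ Finset.univ.erase j, fac S (Function.update q k₀ t) b k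
      = colP k₀ t b * ∏ k ∈ (Finset.univ.erase j).erase k₀, fac S q b k := by
  have hk₀mem : k₀ ∈ Finset.univ.erase j := Finset.mem_erase.2 ⟨Ne.symm hjk, Finset.mem_univ _⟩
  rw [← Finset.mul_prod_erase _ _ hk₀mem]
  congr 1
  · unfold fac
    rw [if_neg hk₀, Function.update_self]
  · exact Finset.prod_congr rfl (fun k hk => fac_update_ne S q b (Finset.mem_erase.1 hk).1 t)

lemma prod_fac_insert (S : Finset (Fin d)) (q : Fin d → ℝ) (b : Fin m → Fin d → Bool)
    {j k₀ : Fin d} (hk₀ : k₀ ∉ S) (hjk : j ≠ k₀) :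
    ∏ k ∈ Finset.univ.erase j, fac (insert k₀ S) q b k
      = cKv k₀ b * ∏ k ∈ (Finset.univ.erase j).erase k₀, fac S q b k := by
  have hk₀mem : k₀ ∈ Finset.univ.erase j := Finset.mem_erase.2 ⟨Ne.symm hjk, Finset.mem_univ _⟩
  rw [← Finset.mul_prod_erase _ _ hk₀mem]
  congr 1
  · unfold fac
    rw [if_pos (Finset.mem_insert_self k₀ S)]
  · refine Finset.prod_congr rfl (fun k hk => ?_)
    unfold fac
    have hkne : k ≠ k₀ := (Finset.mem_erase.1 hk).1
    by_cases hkS : k ∈ S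
    · rw [if_pos (Finset.mem_insert_of_mem hkS), if_pos hkS]
    · rw [if_neg (fun hmem => by
        rcases Finset.mem_insert.1 hmem with h | h
        · exact hkne h
        · exact hkS h), if_neg hkS]

lemma prod_fac_insert_self (S : Finset (Fin d)) (q : Fin d → ℝ) (b : Fin m → Fin d → Bool)
    (k₀ : Fin d) :
    ∏ k ∈ Finset.univ.erase k₀, fac (insert k₀ S) q b k
      = ∏ k ∈ Finset.univ.erase k₀, fac S q b k := by
  refine Finset.prod_congr rfl (fun k hk => ?_)
  unfold fac
  have hkne : k ≠ k₀ := (Finset.mem_erase.1 hk).1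
  by_cases hkS : k ∈ S
  · rw [if_pos (Finset.mem_insert_of_mem hkS), if_pos hkS]
  · rw [if_neg (fun hmem => by
      rcases Finset.mem_insert.1 hmem with h | h
      · exact hkne h
      · exact hkS h), if_neg hkS]

lemma prod_fac_update_self (S : Finset (Fin d)) (q : Fin d → ℝ) (b : Fin m → Fin d → Bool)
    (k₀ : Fin d) (t : ℝ) :
    ∏ k ∈ Finset.univ.erase k₀, fac S (Function.update q k₀ t) b k
      = ∏ k ∈ Finset.univ.erase k₀, fac S q b k :=
  Finset.prod_congr rfl (fun k hk => fac_update_ne S q b (Finset.mem_erase.1 hk).1 t)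

section WithA

variable (A : (Fin m → (Fin d → ℝ)) → Measure (Fin d → ℝ))

/-- mixed fingerprinting functional. -/
def XiT (S : Finset (Fin d)) (q : Fin d → ℝ) (b : Fin m → Fin d → Bool) (j : Fin d) : ℝ :=
  ajv A b j * (if j ∈ S then cHv j b else colP j (q j) b * (Ys j b - m * q j))
    * ∏ k ∈ Finset.univ.erase j, fac S q b k

def Xi (S : Finset (Fin d)) (q : Fin d → ℝ) : ℝ :=
  ∑ j, ∑ b : Fin m → Fin d → Bool, XiT A S q b j

/-- mixed accuracy functional. -/
def FtT (S : Finset (Fin d)) (j : Fin d) (u : ℝ) (q : Fin d → ℝ)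
    (b : Fin m → Fin d → Bool) : ℝ :=
  ajv A b j * colP j u b * ∏ k ∈ Finset.univ.erase j, fac S q b k

def Ft (S : Finset (Fin d)) (j : Fin d) (u : ℝ) (q : Fin d → ℝ) : ℝ :=
  ∑ b : Fin m → Fin d → Bool, FtT A S j u q b

lemma cont_XiT (S : Finset (Fin d)) (q : Fin d → ℝ) (b : Fin m → Fin d → Bool)
    (j k₀ : Fin d) : Continuous (fun t => XiT A S (Function.update q k₀ t) b j) := by
  unfold XiT
  refine Continuous.mul (Continuous.mul continuous_const ?_) ?_
  · by_cases hj : j ∈ S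
    · simp only [if_pos hj]; exact continuous_const
    · simp only [if_neg hj]
      refine Continuous.mul (cont_colP_update j k₀ b q) ?_
      by_cases hjk : j = k₀
      · subst hjk
        simp only [Function.update_self]
        fun_prop
      · simp only [Function.update_of_ne hjk]
        exact continuous_const
  · exact continuous_finset_prod _ (fun k _ => cont_fac_update S k k₀ b q)

lemma cont_FtT (S : Finset (Fin d)) (j : Fin d) (u : ℝ) (q : Fin d → ℝ)
    (b : Fin m → Fin d → Bool) (k₀ : Fin d) :
    Continuous (fun t => FtT A S j u (Function.update q k₀ t) b) := by
  unfold FtT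
  exact Continuous.mul continuous_const
    (continuous_finset_prod _ (fun k _ => cont_fac_update S k k₀ b q))

/-- Base case: the mixed functional at `S = ∅` is the raw statistic. -/
lemma Xi_empty (q : Fin d → ℝ) : Xi A ∅ q = Phi A q := by
  unfold Xi Phi
  rw [Finset.sum_comm]
  refine Finset.sum_congr rfl (fun b _ => ?_)
  rw [Finset.mul_sum]
  refine Finset.sum_congr rfl (fun j _ => ?_)
  unfold XiT fac
  simp only [Finset.notMem_empty, if_false]
  have hw : wgt q b = colP j (q j) b * ∏ k ∈ Finset.univ.erase j, colP k (q k) b := by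
    rw [wgt_eq_prod_colP, ← Finset.mul_prod_erase Finset.univ _ (Finset.mem_univ j)]
  rw [hw]
  ring

lemma Ft_empty (j : Fin d) (u : ℝ) (q : Fin d → ℝ) :
    Ft A ∅ j u q = ∑ b : Fin m → Fin d → Bool,
      wgt (Function.update q j u) b * ajv A b j := by
  unfold Ft FtT fac
  refine Finset.sum_congr rfl (fun b _ => ?_)
  simp only [Finset.notMem_empty, if_false]
  have hw : wgt (Function.update q j u) b
      = colP j u b * ∏ k ∈ Finset.univ.erase j, colP k (q k) b := by
    rw [wgt_eq_prod_colP, ← Finset.mul_prod_erase Finset.univ _ (Finset.mem_univ j)]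
    rw [Function.update_self]
    congr 1
    refine Finset.prod_congr rfl (fun k hk => ?_)
    rw [Function.update_of_ne (Finset.mem_erase.1 hk).1]
  rw [hw]
  ring

/-- Induction step for `Ft`. -/
lemma Ft_step (S : Finset (Fin d)) {j k₀ : Fin d} (hk₀ : k₀ ∉ S) (hjk : j ≠ k₀)
    (u : ℝ) (q : Fin d → ℝ) :
    Ft A (insert k₀ S) j u q
      = (3/2) * ∫ t in (-3⁻¹ : ℝ)..3⁻¹, Ft A S j u (Function.update q k₀ t) := by
  unfold Ft
  rw [intervalIntegral.integral_finset_sum (fun b _ =>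
    ((cont_FtT A S j u q b k₀).intervalIntegrable _ _))]
  rw [Finset.mul_sum]
  refine Finset.sum_congr rfl (fun b _ => ?_)
  unfold FtT
  have hinteg : ∀ t : ℝ, ajv A b j * colP j u b
      * ∏ k ∈ Finset.univ.erase j, fac S (Function.update q k₀ t) b k
      = (ajv A b j * colP j u b * ∏ k ∈ (Finset.univ.erase j).erase k₀, fac S q b k)
        * colP k₀ t b := by
    intro t
    rw [prod_fac_update S q b hk₀ hjk t]
    ring
  rw [intervalIntegral.integral_congr (fun t _ => hinteg t),
    intervalIntegral.integral_const_mul, prod_fac_insert S q b hk₀ hjk]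
  unfold cKv
  ring

/-- Induction step for `XiT`. -/
lemma XiT_step (S : Finset (Fin d)) {k₀ : Fin d} (hk₀ : k₀ ∉ S) (q : Fin d → ℝ)
    (b : Fin m → Fin d → Bool) (j : Fin d) :
    XiT A (insert k₀ S) q b j
      = (3/2) * ∫ t in (-3⁻¹ : ℝ)..3⁻¹, XiT A S (Function.update q k₀ t) b j := by
  by_cases hjk : j = k₀
  · subst hjk
    have hinteg : ∀ t : ℝ, XiT A S (Function.update q j t) b j
        = (ajv A b j * ∏ k ∈ Finset.univ.erase j, fac S q b k)
          * (colP j t b * (Ys j b - m * t)) := by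
      intro t
      unfold XiT
      rw [if_neg hk₀, Function.update_self, prod_fac_update_self S q b j t]
      ring
    rw [intervalIntegral.integral_congr (fun t _ => hinteg t),
      intervalIntegral.integral_const_mul]
    unfold XiT
    rw [if_pos (Finset.mem_insert_self j S), prod_fac_insert_self S q b j]
    unfold cHv
    ring
  · have hinteg : ∀ t : ℝ, XiT A S (Function.update q k₀ t) b j
        = (ajv A b j * (if j ∈ S then cHv j b else colP j (q j) b * (Ys j b - m * q j))
            * ∏ k ∈ (Finset.univ.erase j).erase k₀, fac S q b k) * colP k₀ t b := by
      intro t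
      unfold XiT
      rw [Function.update_of_ne hjk, prod_fac_update S q b hk₀ hjk t]
      ring
    rw [intervalIntegral.integral_congr (fun t _ => hinteg t),
      intervalIntegral.integral_const_mul]
    unfold XiT
    have hif : (if j ∈ insert k₀ S then cHv j b else colP j (q j) b * (Ys j b - m * q j))
        = (if j ∈ S then cHv j b else colP j (q j) b * (Ys j b - m * q j)) := by
      by_cases hjS : j ∈ S
      · rw [if_pos (Finset.mem_insert_of_mem hjS), if_pos hjS]
      · rw [if_neg (fun hmem => by
          rcases Finset.mem_insert.1 hmem with h | h
          · exact hjk h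
          · exact hjS h), if_neg hjS]
    rw [hif, prod_fac_insert S q b hk₀ hjk]
    unfold cKv
    ring

/-- Induction step for `Xi`. -/
lemma Xi_step (S : Finset (Fin d)) {k₀ : Fin d} (hk₀ : k₀ ∉ S) (q : Fin d → ℝ) :
    Xi A (insert k₀ S) q
      = (3/2) * ∫ t in (-3⁻¹ : ℝ)..3⁻¹, Xi A S (Function.update q k₀ t) := by
  unfold Xi
  rw [intervalIntegral.integral_finset_sum (fun j _ =>
    ((continuous_finset_sum _ (fun b _ => cont_XiT A S q b j k₀)).intervalIntegrable _ _))]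
  rw [Finset.mul_sum]
  refine Finset.sum_congr rfl (fun j _ => ?_)
  rw [intervalIntegral.integral_finset_sum (fun b _ =>
    ((cont_XiT A S q b j k₀).intervalIntegrable _ _))]
  rw [Finset.mul_sum]
  exact Finset.sum_congr rfl (fun b _ => XiT_step A S hk₀ q b j)

end WithA
end PGLB
namespace PGLB
open Finset MeasureTheory
open scoped Classical

variable {d m : ℕ}

section WithA
variable (A : (Fin m → (Fin d → ℝ)) → Measure (Fin d → ℝ))

lemma update_in_box {q : Fin d → ℝ} (hq : ∀ k, |q k| ≤ 3⁻¹) {k₀ : Fin d} {t : ℝ}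
    (ht : |t| ≤ 3⁻¹) : ∀ k, |Function.update q k₀ t k| ≤ 3⁻¹ := by
  intro k
  by_cases h : k = k₀
  · subst h; rw [Function.update_self]; exact ht
  · rw [Function.update_of_ne h]; exact hq k

lemma mem_uIoc_abs {t : ℝ} (ht : t ∈ Set.uIoc (-3⁻¹ : ℝ) 3⁻¹) : |t| ≤ 3⁻¹ := by
  rw [Set.uIoc_of_le (by norm_num : (-3⁻¹ : ℝ) ≤ 3⁻¹)] at ht
  rw [abs_le]
  exact ⟨le_of_lt ht.1, ht.2⟩

/-- Transport of the pointwise upper bound through averaging. -/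
lemma Xi_le {U : ℝ} (hU : ∀ q : Fin d → ℝ, (∀ j, |q j| ≤ 3⁻¹) → Phi A q ≤ U)
    (S : Finset (Fin d)) : ∀ q : Fin d → ℝ, (∀ j, |q j| ≤ 3⁻¹) → Xi A S q ≤ U := by
  induction S using Finset.induction with
  | empty =>
    intro q hq
    rw [Xi_empty]
    exact hU q hq
  | @insert k₀ S hk₀ ih =>
    intro q hq
    rw [Xi_step A S hk₀ q]
    have hcont : Continuous (fun t => Xi A S (Function.update q k₀ t)) := by
      unfold Xi
      exact continuous_finset_sum _ (fun j _ =>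
        continuous_finset_sum _ (fun b _ => cont_XiT A S q b j k₀))
    have hmono : ∫ t in (-3⁻¹ : ℝ)..3⁻¹, Xi A S (Function.update q k₀ t)
        ≤ ∫ _t in (-3⁻¹ : ℝ)..3⁻¹, U := by
      refine intervalIntegral.integral_mono_on (by norm_num)
        (hcont.intervalIntegrable _ _) (intervalIntegrable_const) ?_
      intro t ht
      refine ih (Function.update q k₀ t) (update_in_box hq ?_)
      rw [abs_le]
      exact ⟨ht.1, ht.2⟩
    rw [intervalIntegral.integral_const] at hmono
    have : ((3⁻¹ : ℝ) - (-3⁻¹)) • U = (2/3) * U := by norm_num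
    rw [this] at hmono
    linarith

/-- Transport of the accuracy bound through averaging. -/
lemma Ft_bound (hA : ∀ S, IsProbabilityMeasure (A S)) (hacc : AccurateOWM d m A 0.01 0.01)
    (S : Finset (Fin d)) : ∀ j : Fin d, j ∉ S → ∀ q : Fin d → ℝ, (∀ k, |q k| ≤ 3⁻¹) →
      ∀ u : ℝ, |u| ≤ 3⁻¹ → |Ft A S j u q - u| ≤ 7/300 := by
  induction S using Finset.induction with
  | empty =>
    intro j _ q hq u hu
    rw [Ft_empty]
    have hbox := update_in_box hq (k₀ := j) hu
    have hFj := Fj_bound A hA hacc hbox j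
    rw [Function.update_self] at hFj
    exact hFj
  | @insert k₀ S hk₀ ih =>
    intro j hj q hq u hu
    have hjk : j ≠ k₀ := fun h => hj (h ▸ Finset.mem_insert_self k₀ S)
    have hjS : j ∉ S := fun h => hj (Finset.mem_insert_of_mem h)
    rw [Ft_step A S hk₀ hjk u q]
    have hcont : Continuous (fun t => Ft A S j u (Function.update q k₀ t)) :=
      continuous_finset_sum _ (fun b _ => cont_FtT A S j u q b k₀)
    have hsub : (3/2) * (∫ t in (-3⁻¹ : ℝ)..3⁻¹, Ft A S j u (Function.update q k₀ t)) - u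
        = (3/2) * ∫ t in (-3⁻¹ : ℝ)..3⁻¹, (Ft A S j u (Function.update q k₀ t) - u) := by
      rw [intervalIntegral.integral_sub (hcont.intervalIntegrable _ _)
        (intervalIntegrable_const), intervalIntegral.integral_const]
      have : ((3⁻¹ : ℝ) - (-3⁻¹)) • u = (2/3) * u := by norm_num
      rw [this]
      ring
    rw [hsub]
    have hnorm : ‖∫ t in (-3⁻¹ : ℝ)..3⁻¹, (Ft A S j u (Function.update q k₀ t) - u)‖
        ≤ (7/300) * |(3⁻¹ : ℝ) - (-3⁻¹)| := by
      refine intervalIntegral.norm_integral_le_of_norm_le_const (fun t ht => ?_)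
      rw [Real.norm_eq_abs]
      exact ih j hjS (Function.update q k₀ t) (update_in_box hq (mem_uIoc_abs ht)) u hu
    rw [Real.norm_eq_abs] at hnorm
    have habs : |(3/2) * ∫ t in (-3⁻¹ : ℝ)..3⁻¹, (Ft A S j u (Function.update q k₀ t) - u)|
        = (3/2) * |∫ t in (-3⁻¹ : ℝ)..3⁻¹, (Ft A S j u (Function.update q k₀ t) - u)| := by
      rw [abs_mul]
      norm_num
    rw [habs]
    have : |(3⁻¹ : ℝ) - (-3⁻¹)| = 2/3 := by norm_num
    rw [this] at hnorm
    linarith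

end WithA
end PGLB
namespace PGLB
open Finset MeasureTheory
open scoped Classical

variable {d m : ℕ}

section WithA
variable (A : (Fin m → (Fin d → ℝ)) → Measure (Fin d → ℝ))

def Psi (j : Fin d) : ℝ :=
  ∑ b : Fin m → Fin d → Bool, ajv A b j * cHv j b * ∏ k ∈ Finset.univ.erase j, cKv k b

def Ftil (j : Fin d) (u : ℝ) : ℝ :=
  ∑ b : Fin m → Fin d → Bool, ajv A b j * colP j u b * ∏ k ∈ Finset.univ.erase j, cKv k b

lemma Xi_univ (q : Fin d → ℝ) : Xi A Finset.univ q = ∑ j, Psi A j := by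
  unfold Xi Psi
  refine Finset.sum_congr rfl (fun j _ => Finset.sum_congr rfl (fun b _ => ?_))
  unfold XiT
  rw [if_pos (Finset.mem_univ j)]
  congr 1
  exact Finset.prod_congr rfl (fun k hk => by unfold fac; rw [if_pos (Finset.mem_univ k)])

lemma Ftil_eq_Ft (j : Fin d) (u : ℝ) : Ftil A j u = Ft A (Finset.univ.erase j) j u 0 := by
  unfold Ftil Ft FtT
  refine Finset.sum_congr rfl (fun b _ => ?_)
  congr 1
  exact Finset.prod_congr rfl (fun k hk => by unfold fac; rw [if_pos hk])

lemma Ftil_bound (hA : ∀ S, IsProbabilityMeasure (A S))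
    (hacc : AccurateOWM d m A 0.01 0.01) (j : Fin d) {u : ℝ} (hu : |u| ≤ 3⁻¹) :
    |Ftil A j u - u| ≤ 7/300 := by
  rw [Ftil_eq_Ft]
  exact Ft_bound A hA hacc (Finset.univ.erase j) j (Finset.notMem_erase j Finset.univ)
    0 (fun k => by norm_num) u hu

lemma continuous_Ftil (j : Fin d) : Continuous (fun u => Ftil A j u) := by
  unfold Ftil
  exact continuous_finset_sum _ (fun b _ =>
    (continuous_const.mul (continuous_colP j b)).mul continuous_const)

lemma Psi_eq (j : Fin d) :
    Psi A j = (4/3) * (Ftil A j 3⁻¹ - Ftil A j (-3⁻¹))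
      + (3/2) * ∫ u in (-3⁻¹ : ℝ)..3⁻¹, 2 * u * Ftil A j u := by
  have hswap : ∫ u in (-3⁻¹ : ℝ)..3⁻¹, 2 * u * Ftil A j u
      = ∑ b : Fin m → Fin d → Bool, (ajv A b j * ∏ k ∈ Finset.univ.erase j, cKv k b)
          * ∫ u in (-3⁻¹ : ℝ)..3⁻¹, 2 * u * colP j u b := by
    have hintgr : ∀ u : ℝ, 2 * u * Ftil A j u
        = ∑ b : Fin m → Fin d → Bool,
            (ajv A b j * ∏ k ∈ Finset.univ.erase j, cKv k b) * (2 * u * colP j u b) := by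
      intro u
      unfold Ftil
      rw [Finset.mul_sum]
      exact Finset.sum_congr rfl (fun b _ => by ring)
    rw [intervalIntegral.integral_congr (fun u _ => hintgr u),
      intervalIntegral.integral_finset_sum (fun b _ => ?_)]
    · exact Finset.sum_congr rfl (fun b _ => by
        rw [intervalIntegral.integral_const_mul])
    · exact (continuous_const.mul ((by fun_prop : Continuous (fun u : ℝ => 2 * u)).mul
        (continuous_colP j b))).intervalIntegrable _ _
  rw [hswap]
  unfold Psi Ftil
  rw [← Finset.sum_sub_distrib, Finset.mul_sum, Finset.mul_sum, ← Finset.sum_add_distrib]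
  refine Finset.sum_congr rfl (fun b _ => ?_)
  unfold cHv
  rw [cHat_IBP j b]
  ring

lemma Psi_ge (hA : ∀ S, IsProbabilityMeasure (A S))
    (hacc : AccurateOWM d m A 0.01 0.01) (j : Fin d) :
    (239/270 : ℝ) ≤ Psi A j := by
  rw [Psi_eq]
  have h1 := Ftil_bound A hA hacc j (u := 3⁻¹) (by norm_num [abs_le])
  have h2 := Ftil_bound A hA hacc j (u := -3⁻¹) (by norm_num [abs_le])
  -- the integral term
  have hsplit : ∫ u in (-3⁻¹ : ℝ)..3⁻¹, 2 * u * Ftil A j u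
      = (∫ u in (-3⁻¹ : ℝ)..3⁻¹, 2 * u * u)
        + ∫ u in (-3⁻¹ : ℝ)..3⁻¹, 2 * u * (Ftil A j u - u) := by
    have hadd := intervalIntegral.integral_add
      (f := fun u : ℝ => 2 * u * u) (g := fun u : ℝ => 2 * u * (Ftil A j u - u))
      (((by fun_prop : Continuous (fun u : ℝ => 2 * u * u))).intervalIntegrable
        (μ := volume) (-3⁻¹ : ℝ) (3⁻¹ : ℝ))
      (((by fun_prop : Continuous (fun u : ℝ => 2 * u)).mul
        ((continuous_Ftil A j).sub continuous_id)).intervalIntegrable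
        (μ := volume) (-3⁻¹ : ℝ) (3⁻¹ : ℝ))
    rw [← hadd]
    exact intervalIntegral.integral_congr (fun u _ => by ring)
  have hIu : (∫ u in (-3⁻¹ : ℝ)..3⁻¹, 2 * u * u) = 4/81 := by
    have : ∀ u : ℝ, 2 * u * u = 2 * u^2 := fun u => by ring
    rw [intervalIntegral.integral_congr (fun u _ => this u),
      intervalIntegral.integral_const_mul, integral_pow]
    norm_num
  have hIerr : |∫ u in (-3⁻¹ : ℝ)..3⁻¹, 2 * u * (Ftil A j u - u)| ≤ (7/450) * (2/3) := by
    have hnorm : ‖∫ u in (-3⁻¹ : ℝ)..3⁻¹, 2 * u * (Ftil A j u - u)‖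
        ≤ (7/450) * |(3⁻¹ : ℝ) - (-3⁻¹)| := by
      refine intervalIntegral.norm_integral_le_of_norm_le_const (fun t ht => ?_)
      have hta := mem_uIoc_abs ht
      rw [Real.norm_eq_abs, abs_mul, abs_mul]
      have hb := Ftil_bound A hA hacc j hta
      have h2t : |(2:ℝ)| * |t| ≤ 2/3 := by
        rw [abs_two]
        nlinarith
      calc |2| * |t| * |Ftil A j t - t| ≤ (2/3) * (7/300) := by
            refine mul_le_mul h2t hb (abs_nonneg _) (by norm_num)
        _ = 7/450 := by norm_num
    rw [Real.norm_eq_abs] at hnorm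
    have : |(3⁻¹ : ℝ) - (-3⁻¹)| = 2/3 := by norm_num
    rw [this] at hnorm
    exact hnorm
  rw [hsplit, hIu]
  rw [abs_le] at h1 h2 hIerr
  nlinarith [h1.1, h1.2, h2.1, h2.2, hIerr.1, hIerr.2]

end WithA
end PGLB
namespace PGLB
open Finset MeasureTheory
open scoped Classical

variable {d : ℕ}

lemma radProduct_prob {q : Fin d → ℝ} (hq : ∀ j, |q j| ≤ 1) :
    IsProbabilityMeasure (radProduct d q) := by
  haveI : ∀ j, IsProbabilityMeasure (rademacher (q j)) := fun j => rademacher_prob (hq j)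
  rw [radProduct]
  infer_instance

/-- With a single sample, accuracy `0.01` is impossible (`d ≥ 1`). -/
lemma one_sample_impossible (hd : 1 ≤ d)
    (A : (Fin 1 → (Fin d → ℝ)) → Measure (Fin d → ℝ))
    (hA : ∀ S, IsProbabilityMeasure (A S))
    (hacc : AccurateOWM d 1 A 0.01 0.01) : False := by
  classical
  set j₀ : Fin d := ⟨0, hd⟩ with hj₀
  set q0 : Fin d → ℝ := fun _ => 0 with hq0
  set q1 : Fin d → ℝ := Function.update q0 j₀ (3/100) with hq1
  have hq0box : ∀ j, |q0 j| ≤ 1 := fun j => by norm_num [hq0]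
  have hq1box : ∀ j, |q1 j| ≤ 1 := by
    intro j
    by_cases h : j = j₀
    · subst h; rw [hq1, Function.update_self]; norm_num [abs_le]
    · rw [hq1, Function.update_of_ne h]; norm_num [hq0]
  have hacc0 := hacc q0 hq0box
  have hacc1 := hacc q1 hq1box
  rw [show {v : Fin d → ℝ | ∀ j, |v j - q0 j| ≤ 0.01} = Gset q0 from rfl,
    bind_atomic_real hq0box A hA (Gset_measurable q0)] at hacc0
  rw [show {v : Fin d → ℝ | ∀ j, |v j - q1 j| ≤ 0.01} = Gset q1 from rfl,
    bind_atomic_real hq1box A hA (Gset_measurable q1)] at hacc1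
  set P0 : (Fin 1 → Fin d → Bool) → ℝ := fun b => (A (emb b) (Gset q0)).toReal with hP0
  set P1 : (Fin 1 → Fin d → Bool) → ℝ := fun b => (A (emb b) (Gset q1)).toReal with hP1
  -- weight comparison
  have hwcomp : ∀ b : Fin 1 → Fin d → Bool, (97/100) * wgt q0 b ≤ wgt q1 b := by
    intro b
    have hsplit : ∀ q : Fin d → ℝ, wgt q b = ∏ j, rho (b 0 j) (q j) := by
      intro q
      rw [wgt, Fin.prod_univ_one]
    rw [hsplit q0, hsplit q1,
      ← Finset.mul_prod_erase Finset.univ (fun j => rho (b 0 j) (q1 j)) (Finset.mem_univ j₀),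
      ← Finset.mul_prod_erase Finset.univ (fun j => rho (b 0 j) (q0 j)) (Finset.mem_univ j₀)]
    have hReq : ∏ j ∈ Finset.univ.erase j₀, rho (b 0 j) (q1 j)
        = ∏ j ∈ Finset.univ.erase j₀, rho (b 0 j) (q0 j) := by
      refine Finset.prod_congr rfl (fun j hj => ?_)
      rw [hq1, Function.update_of_ne (Finset.mem_erase.1 hj).1]
    rw [hReq]
    have hR0 : 0 ≤ ∏ j ∈ Finset.univ.erase j₀, rho (b 0 j) (q0 j) :=
      Finset.prod_nonneg (fun j _ => rho_nonneg (by norm_num [hq0]))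
    have hfac : (97/100) * rho (b 0 j₀) (q0 j₀) ≤ rho (b 0 j₀) (q1 j₀) := by
      rw [hq1, Function.update_self, hq0]
      cases (b 0 j₀) <;> norm_num [rho, eb]
    calc (97/100) * (rho (b 0 j₀) (q0 j₀) * ∏ j ∈ Finset.univ.erase j₀, rho (b 0 j) (q0 j))
        = ((97/100) * rho (b 0 j₀) (q0 j₀)) * ∏ j ∈ Finset.univ.erase j₀, rho (b 0 j) (q0 j) := by
          ring
      _ ≤ rho (b 0 j₀) (q1 j₀) * ∏ j ∈ Finset.univ.erase j₀, rho (b 0 j) (q0 j) :=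
          mul_le_mul_of_nonneg_right hfac hR0
  have hP0nn : ∀ b, 0 ≤ P0 b := fun b => ENNReal.toReal_nonneg
  have hstep : (9603/10000 : ℝ) ≤ ∑ b : Fin 1 → Fin d → Bool, wgt q1 b * P0 b := by
    have h1 : ∑ b : Fin 1 → Fin d → Bool, (97/100) * (wgt q0 b * P0 b)
        ≤ ∑ b : Fin 1 → Fin d → Bool, wgt q1 b * P0 b := by
      refine Finset.sum_le_sum (fun b _ => ?_)
      rw [← mul_assoc]
      exact mul_le_mul_of_nonneg_right (hwcomp b) (hP0nn b)
    rw [← Finset.mul_sum] at h1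
    have h2 : (97/100 : ℝ) * (99/100)
        ≤ (97/100) * ∑ b : Fin 1 → Fin d → Bool, wgt q0 b * P0 b := by
      refine mul_le_mul_of_nonneg_left ?_ (by norm_num)
      calc (99/100 : ℝ) = 1 - 0.01 := by norm_num
        _ ≤ _ := hacc0
    calc (9603/10000 : ℝ) = (97/100) * (99/100) := by norm_num
      _ ≤ (97/100) * ∑ b : Fin 1 → Fin d → Bool, wgt q0 b * P0 b := h2
      _ ≤ ∑ b : Fin 1 → Fin d → Bool, wgt q1 b * P0 b := h1
  -- disjointness
  have hdisj : Disjoint (Gset q0) (Gset q1) := by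
    rw [Set.disjoint_left]
    intro v hv0 hv1
    have h0 := hv0 j₀
    have h1 := hv1 j₀
    rw [hq0] at h0
    rw [hq1, Function.update_self] at h1
    rw [abs_le] at h0 h1
    have := h0.2
    have := h1.1
    norm_num at *
    linarith
  have hPsum : ∀ b : Fin 1 → Fin d → Bool, P0 b + P1 b ≤ 1 := by
    intro b
    haveI := hA (emb b)
    have hunion : (A (emb b)) (Gset q0) + (A (emb b)) (Gset q1)
        = (A (emb b)) (Gset q0 ∪ Gset q1) :=
      (measure_union hdisj (Gset_measurable q1)).symm
    have hle : (A (emb b)) (Gset q0 ∪ Gset q1) ≤ 1 := prob_le_one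
    have : (A (emb b)) (Gset q0) + (A (emb b)) (Gset q1) ≤ 1 := hunion ▸ hle
    have htr := ENNReal.toReal_mono (by norm_num) this
    rw [ENNReal.toReal_add (measure_ne_top _ _) (measure_ne_top _ _)] at htr
    simpa using htr
  have htot : ∑ b : Fin 1 → Fin d → Bool, wgt q1 b * (P0 b + P1 b) ≤ 1 := by
    calc ∑ b : Fin 1 → Fin d → Bool, wgt q1 b * (P0 b + P1 b)
        ≤ ∑ b : Fin 1 → Fin d → Bool, wgt q1 b * 1 := by
          refine Finset.sum_le_sum (fun b _ => ?_)
          exact mul_le_mul_of_nonneg_left (hPsum b) (wgt_nonneg hq1box b)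
      _ = 1 := by
          rw [Finset.sum_congr rfl (fun b _ => mul_one (wgt q1 b)), wgt_total]
  have hsplitsum : ∑ b : Fin 1 → Fin d → Bool, wgt q1 b * (P0 b + P1 b)
      = (∑ b : Fin 1 → Fin d → Bool, wgt q1 b * P0 b)
        + ∑ b : Fin 1 → Fin d → Bool, wgt q1 b * P1 b := by
    rw [← Finset.sum_add_distrib]
    exact Finset.sum_congr rfl (fun b _ => by ring)
  rw [hsplitsum] at htot
  have h99 : (99/100 : ℝ) ≤ ∑ b : Fin 1 → Fin d → Bool, wgt q1 b * P1 b := by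
    calc (99/100 : ℝ) = 1 - 0.01 := by norm_num
      _ ≤ _ := hacc1
  linarith

end PGLB

set_option maxHeartbeats 1000000 in
/-- Any `(1/m³, 1, 1/m³)`-perfectly generalizing, `(0.01, 0.01)`-accurate
algorithm for the one-way marginals problem over `d` coordinates requires
`Ω(d)` samples. -/
theorem pg_one_way_marginals_lower_bound :
    ∃ c : ℝ, 0 < c ∧ ∃ d₀ : ℕ, ∀ d : ℕ, d₀ ≤ d → ∀ m : ℕ, 0 < m →
      ∀ A : (Fin m → (Fin d → ℝ)) → Measure (Fin d → ℝ),
        (∀ S, IsProbabilityMeasure (A S)) →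
        PerfectlyGeneralizing A (1 / (m : ℝ) ^ 3) 1 (1 / (m : ℝ) ^ 3) →
        AccurateOWM d m A 0.01 0.01 →
        c * d ≤ (m : ℝ) := by
  classical
  refine ⟨1/100, by norm_num, 1, ?_⟩
  intro d hd m hm A hA hPG hacc
  by_cases hm1 : m = 1
  · subst hm1
    exact (PGLB.one_sample_impossible hd A hA hacc).elim
  · have hm2 : 2 ≤ m := by omega
    have hmR : (2:ℝ) ≤ (m:ℝ) := by exact_mod_cast hm2
    have hd1 : (1:ℝ) ≤ (d:ℝ) := by exact_mod_cast hd
    have hd0 : (0:ℝ) < (d:ℝ) := lt_of_lt_of_le one_pos hd1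
    have hm0 : (0:ℝ) ≤ (m:ℝ) := by positivity
    set δ : ℝ := 1 / (m:ℝ)^3 with hδdef
    have hδ0 : 0 ≤ δ := by positivity
    set U : ℝ := Real.exp 1 * Real.sqrt ((d:ℝ)*m) + δ*((d:ℝ)*Real.sqrt m)
      + δ*((4/3)*(d:ℝ)*m) with hUdef
    have hUq : ∀ q : Fin d → ℝ, (∀ j, |q j| ≤ 3⁻¹) → PGLB.Phi A q ≤ U := by
      intro q hq
      have hq1 : ∀ j, |q j| ≤ 1 := fun j => le_trans (hq j) (by norm_num)
      have hprob := PGLB.radProduct_prob hq1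
      obtain ⟨Sim, hSimP, hSimPG⟩ := hPG (radProduct d q) hprob
      exact PGLB.Phi_le A hA hq hδ0 hδ0 Sim hSimP hSimPG
    have hXi : PGLB.Xi A Finset.univ (fun _ => 0) ≤ U :=
      PGLB.Xi_le A hUq Finset.univ (fun _ => 0) (fun j => by norm_num)
    have hlower : (239/270 : ℝ) * d ≤ PGLB.Xi A Finset.univ (fun _ => 0) := by
      rw [PGLB.Xi_univ]
      calc (239/270 : ℝ) * d = ∑ _j : Fin d, (239/270:ℝ) := by
            rw [Finset.sum_const, Finset.card_univ, Fintype.card_fin, nsmul_eq_mul]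
            ring
        _ ≤ ∑ j, PGLB.Psi A j := Finset.sum_le_sum (fun j _ => PGLB.Psi_ge A hA hacc j)
    have hchain : (239/270 : ℝ) * d ≤ U := le_trans hlower hXi
    -- arithmetic from here on
    have hsm : Real.sqrt (m:ℝ) ≤ (m:ℝ) := by
      have h1 : (m:ℝ) ≤ (m:ℝ)^2 := by nlinarith
      calc Real.sqrt (m:ℝ) ≤ Real.sqrt ((m:ℝ)^2) := Real.sqrt_le_sqrt h1
        _ = (m:ℝ) := Real.sqrt_sq (by positivity)
    have hm3 : (0:ℝ) < (m:ℝ)^3 := by positivity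
    have hm24 : (0:ℝ) ≤ (m:ℝ)^2 - 4 := by nlinarith [hmR]
    have hkey : (4:ℝ)*((d:ℝ)*m) ≤ (d:ℝ)*(m:ℝ)^3 := by
      nlinarith [mul_nonneg (mul_nonneg hd0.le hm0) hm24]
    have h2 : δ * ((d:ℝ)*Real.sqrt m) ≤ (d:ℝ)/4 := by
      rw [hδdef, div_mul_eq_mul_div, one_mul, div_le_div_iff₀ hm3 (by norm_num : (0:ℝ) < 4)]
      have hdm := mul_le_mul_of_nonneg_left hsm hd0.le
      nlinarith [hdm, hkey]
    have h3 : δ * ((4/3)*(d:ℝ)*m) ≤ (d:ℝ)/3 := by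
      rw [hδdef, div_mul_eq_mul_div, one_mul, div_le_div_iff₀ hm3 (by norm_num : (0:ℝ) < 3)]
      nlinarith [hkey]
    have hexp : Real.exp 1 ≤ 2.72 := le_of_lt (lt_trans Real.exp_one_lt_d9 (by norm_num))
    have hsqnn : (0:ℝ) ≤ Real.sqrt ((d:ℝ)*m) := Real.sqrt_nonneg _
    have hfinal : (3/10 : ℝ)*d ≤ 2.72*Real.sqrt ((d:ℝ)*m) := by
      have e1 : Real.exp 1 * Real.sqrt ((d:ℝ)*m) ≤ 2.72 * Real.sqrt ((d:ℝ)*m) :=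
        mul_le_mul_of_nonneg_right hexp hsqnn
      have hch := hchain
      rw [hUdef] at hch
      linarith [hch, e1, h2, h3, hd0.le]
    have hsq2 : ((3/10 : ℝ)*d)*((3/10 : ℝ)*d) ≤ (2.72*Real.sqrt ((d:ℝ)*m))*(2.72*Real.sqrt ((d:ℝ)*m)) :=
      mul_self_le_mul_self (by positivity) hfinal
    have hsq3 : (9/100 : ℝ)*((d:ℝ)*d) ≤ 7.3984*((d:ℝ)*m) := by
      have hms : Real.sqrt ((d:ℝ)*m) * Real.sqrt ((d:ℝ)*m) = (d:ℝ)*m :=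
        Real.mul_self_sqrt (by positivity)
      have h := hsq2
      rw [show (2.72*Real.sqrt ((d:ℝ)*m))*(2.72*Real.sqrt ((d:ℝ)*m))
          = 7.3984*(Real.sqrt ((d:ℝ)*m)*Real.sqrt ((d:ℝ)*m)) by ring, hms] at h
      rw [show (9/100 : ℝ)*((d:ℝ)*d) = ((3/10 : ℝ)*d)*((3/10 : ℝ)*d) by ring]
      exact h
    have h10 : (9/100 : ℝ)*(d:ℝ) ≤ 7.3984*(m:ℝ) := by
      have hrw : (d:ℝ)*((9/100 : ℝ)*d) ≤ (d:ℝ)*(7.3984*m) := by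
        have e1 : (d:ℝ)*((9/100 : ℝ)*d) = (9/100 : ℝ)*((d:ℝ)*d) := by ring
        have e2 : (d:ℝ)*(7.3984*m) = 7.3984*((d:ℝ)*m) := by ring
        rw [e1, e2]
        exact hsq3
      exact le_of_mul_le_mul_left hrw hd0
    linarith [h10, hm0]
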